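/- arXiv:1903.04440 — 3 statements merged into one kernel-verified Lean document; each statement's English description precedes it below -/
import Mathlib

section
/- There exists a constant K < ∞, depending only on d, on the bounds for σ, σ', σ'' and on the compact sets X, Y, C, W¹, W² (in particular independent of N₁, N₂, of the data sequence, of the initial parameters, and of i, j, k), such that for every N₁, N₂ ∈ ℕ, every i ∈ {1,…,N₂}, every j ∈ {1,…,N₁} and every k ∈ {0,1,…,⌊N₁⌋}, the stochastic gradient descent iterates satisfy |C_k^i| + ‖W_k^{1,j}‖ + |W_k^{2,i,j}| ≤ K. -/
open MeasureTheory Finset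
open scoped RealInnerProductSpace BigOperators

private lemma abs_mul_le' {a b A B : ℝ} (ha : |a| ≤ A) (hb : |b| ≤ B) :
    |a * b| ≤ A * B := by
  rw [abs_mul]
  exact mul_le_mul ha hb (abs_nonneg _) ((abs_nonneg a).trans ha)

private lemma avg_abs_le {n : ℕ} (hn : 0 < n) (f : Fin n → ℝ) {M : ℝ}
    (h : ∀ i, |f i| ≤ M) : |(n : ℝ)⁻¹ * ∑ i, f i| ≤ M := by
  have hn' : (0 : ℝ) < n := by exact_mod_cast hn
  have h1 : |∑ i, f i| ≤ n * M := by
    calc |∑ i, f i| ≤ ∑ i, |f i| := Finset.abs_sum_le_sum_abs _ _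
      _ ≤ ∑ _i : Fin n, M := Finset.sum_le_sum (fun i _ => h i)
      _ = n * M := by simp [Finset.sum_const, Finset.card_univ, mul_comm]
  calc |(n : ℝ)⁻¹ * ∑ i, f i| = (n : ℝ)⁻¹ * |∑ i, f i| := by
        rw [abs_mul, abs_of_nonneg (inv_nonneg.mpr hn'.le)]
    _ ≤ (n : ℝ)⁻¹ * (n * M) := by
        exact mul_le_mul_of_nonneg_left h1 (inv_nonneg.mpr hn'.le)
    _ = M := by field_simp

set_option maxHeartbeats 1600000 in
/-- **Uniform bound on the SGD iterates** (two-layer network, scaled learning rates).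
There is a constant `K` depending only on `d`, the bound `B` for `σ, σ', σ''` and the
compact sets `X, Y, C, W¹, W²`, such that all SGD iterates up to step `N₁` are bounded
by `K`, uniformly in `N₁, N₂`, the data and the initialization. -/
theorem sgd_iterates_uniformly_bounded
    (d : ℕ) (B : ℝ)
    (SX : Set (EuclideanSpace ℝ (Fin d))) (SY : Set ℝ)
    (SC : Set ℝ) (SW1 : Set (EuclideanSpace ℝ (Fin d))) (SW2 : Set ℝ)
    (hSX : IsCompact SX) (hSY : IsCompact SY) (hSC : IsCompact SC)
    (hSW1 : IsCompact SW1) (hSW2 : IsCompact SW2) :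
    ∃ K : ℝ, ∀ (σ : ℝ → ℝ), ContDiff ℝ 2 σ →
      (∀ z, |σ z| ≤ B) → (∀ z, |deriv σ z| ≤ B) → (∀ z, |deriv (deriv σ) z| ≤ B) →
      ∀ (N₁ N₂ : ℕ), 0 < N₁ → 0 < N₂ →
      ∀ (x : ℕ → EuclideanSpace ℝ (Fin d)) (y : ℕ → ℝ),
        (∀ k, x k ∈ SX) → (∀ k, y k ∈ SY) →
      ∀ (C : ℕ → Fin N₂ → ℝ) (W1 : ℕ → Fin N₁ → EuclideanSpace ℝ (Fin d))
        (W2 : ℕ → Fin N₂ → Fin N₁ → ℝ)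
        (H1 : ℕ → Fin N₁ → ℝ) (Z : ℕ → Fin N₂ → ℝ) (H2 : ℕ → Fin N₂ → ℝ) (g : ℕ → ℝ),
        (∀ i, C 0 i ∈ SC) → (∀ j, W1 0 j ∈ SW1) → (∀ i j, W2 0 i j ∈ SW2) →
        (∀ k j, H1 k j = σ (⟪W1 k j, x k⟫)) →
        (∀ k i, Z k i = (N₁ : ℝ)⁻¹ * ∑ j, W2 k i j * H1 k j) →
        (∀ k i, H2 k i = σ (Z k i)) →
        (∀ k, g k = (N₂ : ℝ)⁻¹ * ∑ i, C k i * H2 k i) →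
        (∀ k i, C (k+1) i = C k i + (N₁ : ℝ)⁻¹ * (y k - g k) * H2 k i) →
        (∀ k j, W1 (k+1) j = W1 k j +
          ((N₁ : ℝ)⁻¹ * (y k - g k) *
            ((N₂ : ℝ)⁻¹ * ∑ i, C k i * deriv σ (Z k i) * W2 k i j) *
            deriv σ (⟪W1 k j, x k⟫)) • x k) →
        (∀ k i j, W2 (k+1) i j = W2 k i j +
          (N₁ : ℝ)⁻¹ * (y k - g k) * C k i * deriv σ (Z k i) * H1 k j) →
      ∀ k ≤ N₁, ∀ (i : Fin N₂) (j : Fin N₁),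
        |C k i| + ‖W1 k j‖ + |W2 k i j| ≤ K := by
  -- bounds for the compact sets
  obtain ⟨RX₀, hRX₀⟩ := hSX.isBounded.exists_norm_le
  obtain ⟨RY₀, hRY₀⟩ := hSY.isBounded.exists_norm_le
  obtain ⟨RC₀, hRC₀⟩ := hSC.isBounded.exists_norm_le
  obtain ⟨RW1₀, hRW1₀⟩ := hSW1.isBounded.exists_norm_le
  obtain ⟨RW2₀, hRW2₀⟩ := hSW2.isBounded.exists_norm_le
  set RX := max RX₀ 0 with hRXdef
  set RY := max RY₀ 0 with hRYdef
  set RC := max RC₀ 0 with hRCdef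
  set RW1 := max RW1₀ 0 with hRW1def
  set RW2 := max RW2₀ 0 with hRW2def
  set D := B * RY + B * B with hDdef
  set KC := (1 + RC) * Real.exp D with hKCdef
  set M2 := (RY + B * KC) * KC * B * B with hM2def
  set KW2 := RW2 + M2 with hKW2def
  set M1 := (RY + B * KC) * (KC * B * KW2) * B * RX with hM1def
  clear_value RX RY RC RW1 RW2 D KC M2 KW2 M1
  have hRX0 : 0 ≤ RX := hRXdef ▸ le_max_right _ _
  have hRY0 : 0 ≤ RY := hRYdef ▸ le_max_right _ _
  have hRC0 : 0 ≤ RC := hRCdef ▸ le_max_right _ _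
  have hRW10 : 0 ≤ RW1 := hRW1def ▸ le_max_right _ _
  have hRW20 : 0 ≤ RW2 := hRW2def ▸ le_max_right _ _
  refine ⟨KC + (RW1 + M1) + KW2, ?_⟩
  intro σ hσsm hσ hσ' hσ'' N₁ N₂ hN₁ hN₂ x y hx hy C W1 W2 H1 Z H2 g
    hC0 hW10 hW20 hH1 hZ hH2 hg hCrec hW1rec hW2rec
  have hB0 : 0 ≤ B := (abs_nonneg _).trans (hσ 0)
  have hD0 : 0 ≤ D := by rw [hDdef]; positivity
  have hKC0 : 0 ≤ KC := by rw [hKCdef]; positivity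
  have hRYBKC : 0 ≤ RY + B * KC := by
    have := mul_nonneg hB0 hKC0; linarith
  have hM20 : 0 ≤ M2 := by
    rw [hM2def]
    exact mul_nonneg (mul_nonneg (mul_nonneg hRYBKC hKC0) hB0) hB0
  have hKW20 : 0 ≤ KW2 := by rw [hKW2def]; linarith
  have hM10 : 0 ≤ M1 := by
    rw [hM1def]
    exact mul_nonneg (mul_nonneg (mul_nonneg hRYBKC
      (mul_nonneg (mul_nonneg hKC0 hB0) hKW20)) hB0) hRX0
  have hN₁' : (0 : ℝ) < N₁ := by exact_mod_cast hN₁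
  set q := 1 + D / (N₁ : ℝ) with hqdef
  clear_value q
  have hDN0 : 0 ≤ D / (N₁ : ℝ) := by positivity
  have hq1 : (1 : ℝ) ≤ q := by rw [hqdef]; linarith
  have hq0 : (0 : ℝ) ≤ q := by linarith
  -- (1+RC) * q^k ≤ KC for k ≤ N₁
  have hqK : ∀ k, k ≤ N₁ → (1 + RC) * q ^ k ≤ KC := by
    intro k hk
    have h1 : q ^ k ≤ q ^ N₁ := pow_le_pow_right₀ hq1 hk
    have h2 : q ≤ Real.exp (D / N₁) := by
      have := Real.add_one_le_exp (D / (N₁ : ℝ))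
      rw [hqdef]; linarith
    have h3 : q ^ N₁ ≤ (Real.exp (D / N₁)) ^ N₁ := pow_le_pow_left₀ hq0 h2 N₁
    have h4 : (Real.exp (D / N₁)) ^ N₁ = Real.exp D := by
      rw [← Real.exp_nat_mul]
      congr 1
      field_simp
    have h5 : q ^ k ≤ Real.exp D := by
      calc q ^ k ≤ q ^ N₁ := h1
        _ ≤ (Real.exp (D / N₁)) ^ N₁ := h3
        _ = Real.exp D := h4
    have h6 : 0 ≤ 1 + RC := by linarith
    calc (1 + RC) * q ^ k ≤ (1 + RC) * Real.exp D :=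
          mul_le_mul_of_nonneg_left h5 h6
      _ = KC := hKCdef.symm
  have hone_le : ∀ k : ℕ, (1 : ℝ) ≤ (1 + RC) * q ^ k := by
    intro k
    have h1 : (1:ℝ) ≤ q ^ k := one_le_pow₀ hq1
    nlinarith
  have hinv0 : (0:ℝ) ≤ (N₁ : ℝ)⁻¹ := inv_nonneg.mpr hN₁'.le
  have hinvN : |(N₁ : ℝ)⁻¹| ≤ (N₁ : ℝ)⁻¹ := le_of_eq (abs_of_nonneg hinv0)
  -- main induction
  have key : ∀ k, k ≤ N₁ →
      (∀ i, 1 + |C k i| ≤ (1 + RC) * q ^ k) ∧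
      (∀ i j, |W2 k i j| ≤ RW2 + k * M2 / N₁) ∧
      (∀ j, ‖W1 k j‖ ≤ RW1 + k * M1 / N₁) := by
    intro k
    induction k with
    | zero =>
      intro _
      refine ⟨fun i => ?_, fun i j => ?_, fun j => ?_⟩
      · have h := hRC₀ _ (hC0 i)
        rw [Real.norm_eq_abs] at h
        have : |C 0 i| ≤ RC := by rw [hRCdef]; exact h.trans (le_max_left _ _)
        simp only [pow_zero, mul_one]
        linarith
      · have h := hRW2₀ _ (hW20 i j)
        rw [Real.norm_eq_abs] at h
        have : |W2 0 i j| ≤ RW2 := by rw [hRW2def]; exact h.trans (le_max_left _ _)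
        simpa using this
      · have h := hRW1₀ _ (hW10 j)
        have : ‖W1 0 j‖ ≤ RW1 := by rw [hRW1def]; exact h.trans (le_max_left _ _)
        simpa using this
    | succ k ih =>
      intro hk1
      have hk : k ≤ N₁ := Nat.le_of_succ_le hk1
      obtain ⟨ihC, ihW2, ihW1⟩ := ih hk
      -- basic bounds at step k
      have hCq : ∀ i, |C k i| ≤ (1 + RC) * q ^ k - 1 := fun i => by
        have := ihC i; linarith
      have hCb : ∀ i, |C k i| ≤ KC := fun i => by
        have h1 := hCq i
        have h2 := hqK k hk
        linarith
      have hH2b : ∀ i, |H2 k i| ≤ B := fun i => by rw [hH2]; exact hσ _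
      have hH1b : ∀ j, |H1 k j| ≤ B := fun j => by rw [hH1]; exact hσ _
      have hW2b : ∀ i j, |W2 k i j| ≤ KW2 := fun i j => by
        have h1 := ihW2 i j
        have h2 : (k : ℝ) * M2 / N₁ ≤ M2 := by
          rw [div_le_iff₀ hN₁']
          have : (k : ℝ) ≤ N₁ := by exact_mod_cast hk
          nlinarith
        rw [hKW2def]; linarith
      have hgq : |g k| ≤ B * ((1 + RC) * q ^ k - 1) := by
        rw [hg]
        refine avg_abs_le hN₂ _ (fun i => ?_)
        calc |C k i * H2 k i| ≤ ((1 + RC) * q ^ k - 1) * B :=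
              abs_mul_le' (hCq i) (hH2b i)
          _ = B * ((1 + RC) * q ^ k - 1) := by ring
      have hgb : |g k| ≤ B * KC := by
        refine hgq.trans (mul_le_mul_of_nonneg_left ?_ hB0)
        have := hqK k hk
        linarith
      have hyb : |y k| ≤ RY := by
        have h := hRY₀ _ (hy k)
        rw [Real.norm_eq_abs] at h
        rw [hRYdef]; exact h.trans (le_max_left _ _)
      have hygb : |y k - g k| ≤ RY + B * KC :=
        (abs_sub _ _).trans (add_le_add hyb hgb)
      have hygq : |y k - g k| ≤ RY + B * ((1 + RC) * q ^ k - 1) :=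
        (abs_sub _ _).trans (add_le_add hyb hgq)
      refine ⟨fun i => ?_, fun i j => ?_, fun j => ?_⟩
      · -- C bound
        rw [hCrec]
        have hΔ : |(N₁ : ℝ)⁻¹ * (y k - g k) * H2 k i| ≤
            (N₁ : ℝ)⁻¹ * (RY + B * ((1 + RC) * q ^ k - 1)) * B :=
          abs_mul_le' (abs_mul_le' hinvN hygq) (hH2b i)
        have h1 : 1 + |C k i + (N₁ : ℝ)⁻¹ * (y k - g k) * H2 k i| ≤
            (1 + RC) * q ^ k +
              (N₁ : ℝ)⁻¹ * (RY + B * ((1 + RC) * q ^ k - 1)) * B := by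
          have h2 := abs_add_le (C k i) ((N₁ : ℝ)⁻¹ * (y k - g k) * H2 k i)
          have h3 := ihC i
          linarith
        have hq : (1 + RC) * q ^ (k + 1) =
            (1 + RC) * q ^ k + (1 + RC) * q ^ k * (D / (N₁ : ℝ)) := by
          rw [hqdef]; ring
        have base : (RY + B * ((1 + RC) * q ^ k - 1)) * B ≤
            (1 + RC) * q ^ k * (B * RY + B * B) := by
          nlinarith [mul_le_mul_of_nonneg_left (hone_le k) (mul_nonneg hB0 hRY0),
            mul_nonneg hB0 hB0]
        have hfin : (N₁ : ℝ)⁻¹ * (RY + B * ((1 + RC) * q ^ k - 1)) * B ≤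
            (1 + RC) * q ^ k * (D / (N₁ : ℝ)) := by
          rw [hDdef, div_eq_mul_inv]
          calc (N₁ : ℝ)⁻¹ * (RY + B * ((1 + RC) * q ^ k - 1)) * B
              = ((RY + B * ((1 + RC) * q ^ k - 1)) * B) * (N₁ : ℝ)⁻¹ := by ring
            _ ≤ ((1 + RC) * q ^ k * (B * RY + B * B)) * (N₁ : ℝ)⁻¹ :=
                mul_le_mul_of_nonneg_right base hinv0
            _ = (1 + RC) * q ^ k * ((B * RY + B * B) * (N₁ : ℝ)⁻¹) := by ring
        linarith
      · -- W2 bound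
        rw [hW2rec]
        have hΔ : |(N₁ : ℝ)⁻¹ * (y k - g k) * C k i * deriv σ (Z k i) * H1 k j| ≤
            (N₁ : ℝ)⁻¹ * (RY + B * KC) * KC * B * B :=
          abs_mul_le' (abs_mul_le' (abs_mul_le' (abs_mul_le' hinvN hygb) (hCb i))
            (hσ' _)) (hH1b j)
        have h1 := (abs_add_le (W2 k i j) _).trans (add_le_add (ihW2 i j) hΔ)
        have heq : (N₁ : ℝ)⁻¹ * (RY + B * KC) * KC * B * B = M2 / N₁ := by
          rw [hM2def]; field_simp
          all_goals ring
        rw [heq] at h1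
        refine h1.trans ?_
        have hring : RW2 + (k : ℝ) * M2 / N₁ + M2 / N₁ =
            RW2 + ((k : ℝ) + 1) * M2 / N₁ := by ring
        push_cast <;> linarith [hring.le]
      · -- W1 bound
        rw [hW1rec]
        have havg : |(N₂ : ℝ)⁻¹ * ∑ i, C k i * deriv σ (Z k i) * W2 k i j| ≤
            KC * B * KW2 := by
          refine avg_abs_le hN₂ _ (fun i => ?_)
          exact abs_mul_le' (abs_mul_le' (hCb i) (hσ' _)) (hW2b i j)
        have hs : |(N₁ : ℝ)⁻¹ * (y k - g k) *
            ((N₂ : ℝ)⁻¹ * ∑ i, C k i * deriv σ (Z k i) * W2 k i j) *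
            deriv σ (⟪W1 k j, x k⟫)| ≤
            (N₁ : ℝ)⁻¹ * (RY + B * KC) * (KC * B * KW2) * B :=
          abs_mul_le' (abs_mul_le' (abs_mul_le' hinvN hygb) havg) (hσ' _)
        have hxk : ‖x k‖ ≤ RX := by
          rw [hRXdef]; exact (hRX₀ _ (hx k)).trans (le_max_left _ _)
        have h1 : ‖W1 k j + ((N₁ : ℝ)⁻¹ * (y k - g k) *
            ((N₂ : ℝ)⁻¹ * ∑ i, C k i * deriv σ (Z k i) * W2 k i j) *
            deriv σ (⟪W1 k j, x k⟫)) • x k‖ ≤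
            ‖W1 k j‖ + (N₁ : ℝ)⁻¹ * (RY + B * KC) * (KC * B * KW2) * B * RX := by
          refine (norm_add_le _ _).trans (add_le_add le_rfl ?_)
          rw [norm_smul, Real.norm_eq_abs]
          have hs0 : 0 ≤ (N₁ : ℝ)⁻¹ * (RY + B * KC) * (KC * B * KW2) * B := by
            exact mul_nonneg (mul_nonneg (mul_nonneg hinv0 hRYBKC)
              (mul_nonneg (mul_nonneg hKC0 hB0) hKW20)) hB0
          exact mul_le_mul hs hxk (norm_nonneg _) hs0
        have heq : (N₁ : ℝ)⁻¹ * (RY + B * KC) * (KC * B * KW2) * B * RX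
            = M1 / N₁ := by
          rw [hM1def]; field_simp
          all_goals ring
        rw [heq] at h1
        refine h1.trans ?_
        have hring : RW1 + (k : ℝ) * M1 / N₁ + M1 / N₁ =
            RW1 + ((k : ℝ) + 1) * M1 / N₁ := by ring
        push_cast <;> linarith [ihW1 j, hring.le]
  -- conclude
  intro k hk i j
  obtain ⟨hC, hW2', hW1'⟩ := key k hk
  have hkN : (k : ℝ) ≤ N₁ := by exact_mod_cast hk
  have h1 : |C k i| ≤ KC := by
    have := hC i
    have h2 := hqK k hk
    linarith
  have h2 : |W2 k i j| ≤ KW2 := by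
    have := hW2' i j
    have hle : (k : ℝ) * M2 / N₁ ≤ M2 := by
      rw [div_le_iff₀ hN₁']; nlinarith
    rw [hKW2def]; linarith
  have h3 : ‖W1 k j‖ ≤ RW1 + M1 := by
    have := hW1' j
    have hle : (k : ℝ) * M1 / N₁ ≤ M1 := by
      rw [div_le_iff₀ hN₁']; nlinarith
    linarith
  linarith
end

section
/- The function Γ: ℝ^d → ℝ defined by Γ(w) = ∫_X h(x) σ'(Z(x)) σ(w·x) π(dx) is real analytic on all of ℝ^d. -/
open MeasureTheory
open scoped RealInnerProductSpace NNReal ENNReal Nat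

set_option maxHeartbeats 1000000

section Aux

/-- Uniform Taylor expansion of a real analytic function on a compact set: a common
radius and a common bound for the coefficients. -/
lemma uniform_taylor {σ : ℝ → ℝ} (hσ : AnalyticOnNhd ℝ σ Set.univ)
    {K : Set ℝ} (hK : IsCompact K) :
    ∃ r : ℝ≥0, 0 < r ∧ ∃ C : ℝ, ∀ t₀ ∈ K, ∃ p : FormalMultilinearSeries ℝ ℝ ℝ,
      HasFPowerSeriesOnBall σ p t₀ r ∧ ∀ n, ‖p n‖ * (r : ℝ) ^ n ≤ C := by
  rcases K.eq_empty_or_nonempty with hKe | hKne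
  · exact ⟨1, one_pos, 0, by simp [hKe]⟩
  -- for each `t`, choose a power series for `σ` at `t`
  have hA : ∀ t : ℝ, ∃ p : FormalMultilinearSeries ℝ ℝ ℝ, ∃ R : ℝ≥0∞,
      HasFPowerSeriesOnBall σ p t R ∧ ∃ ρ : ℝ≥0, 0 < ρ ∧ (3 * ρ : ℝ≥0∞) < R := by
    intro t
    obtain ⟨p, hp⟩ := hσ t (Set.mem_univ t)
    obtain ⟨R, hR⟩ := hp
    refine ⟨p, R, hR, ?_⟩
    obtain ⟨q, hq0, hqR⟩ := ENNReal.lt_iff_exists_nnreal_btwn.1 hR.r_pos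
    have hq0' : 0 < q := by
      have := hq0
      simpa using ENNReal.coe_pos.1 hq0
    refine ⟨q / 4, by positivity, ?_⟩
    have h34 : (3 * (q / 4) : ℝ≥0) < q := by
      rw [← NNReal.coe_lt_coe]
      push_cast
      have hq0'' : (0:ℝ) < q := hq0'
      nlinarith
    calc (3 * ((q / 4 : ℝ≥0) : ℝ≥0∞)) = ((3 * (q / 4) : ℝ≥0) : ℝ≥0∞) := by norm_cast
      _ < (q : ℝ≥0∞) := ENNReal.coe_lt_coe.2 h34
      _ < R := hqR
  choose p R hpR ρ hρ0 hρR using hA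
  -- extract a finite subcover by balls
  obtain ⟨s, hsK, hscov⟩ := hK.elim_nhds_subcover (fun t => Metric.ball t (ρ t))
    (fun t _ => Metric.ball_mem_nhds t (by exact_mod_cast hρ0 t))
  have hsne : s.Nonempty := by
    obtain ⟨t₀, ht₀⟩ := hKne
    obtain ⟨i, hi, _⟩ := Set.mem_iUnion₂.1 (hscov ht₀)
    exact ⟨i, hi⟩
  -- uniform radius and bound
  set r : ℝ≥0 := s.inf' hsne ρ with hr_def
  have hr0 : 0 < r := by
    rw [hr_def, Finset.lt_inf'_iff]
    exact fun i _ => hρ0 i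
  have h23 : ∀ a : ℝ≥0∞, a + a ≤ 3 * a := by
    intro a
    calc a + a = 2 * a := (two_mul a).symm
      _ ≤ 3 * a := mul_le_mul_left (by norm_num) a
  -- big sums
  have hsum : ∀ i : ℝ, Summable fun u : Σ k l : ℕ,
      { t : Finset (Fin (k + l)) // t.card = l } =>
        ‖p i (u.1 + u.2.1)‖₊ * (ρ i) ^ u.2.1 * (ρ i) ^ u.1 := by
    intro i
    apply (p i).changeOriginSeries_summable_aux₁
    exact ((h23 _).trans_lt (hρR i)).trans_le (hpR i).r_le
  set D : ℝ → ℝ≥0 := fun i => ∑' u : Σ k l : ℕ,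
      { t : Finset (Fin (k + l)) // t.card = l },
        ‖p i (u.1 + u.2.1)‖₊ * (ρ i) ^ u.2.1 * (ρ i) ^ u.1 with hD_def
  refine ⟨r, hr0, ((s.sup' hsne fun i => (D i : ℝ)) : ℝ), ?_⟩
  intro t₀ ht₀
  obtain ⟨i, hi, hti⟩ := Set.mem_iUnion₂.1 (hscov ht₀)
  have hri : r ≤ ρ i := Finset.inf'_le _ hi
  set y : ℝ := t₀ - i with hy_def
  have hy : ‖y‖₊ < ρ i := by
    have hd : dist t₀ i < ρ i := Metric.mem_ball.1 hti
    rw [← NNReal.coe_lt_coe, coe_nnnorm]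
    simpa [hy_def, Real.norm_eq_abs, Real.dist_eq] using hd
  have hyR : (‖y‖₊ : ℝ≥0∞) < R i := by
    calc (‖y‖₊ : ℝ≥0∞) < ρ i := ENNReal.coe_lt_coe.2 hy
      _ ≤ 3 * ρ i := le_mul_of_one_le_left zero_le (by norm_num)
      _ < R i := hρR i
  have hyrad : (‖y‖₊ : ℝ≥0∞) < (p i).radius := hyR.trans_le (hpR i).r_le
  have hball : HasFPowerSeriesOnBall σ ((p i).changeOrigin y) t₀ (R i - ‖y‖₊) := by
    have := (hpR i).changeOrigin (y := y) hyR
    simpa [hy_def] using this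
  refine ⟨(p i).changeOrigin y, ?_, ?_⟩
  · refine hball.mono (by exact_mod_cast hr0) ?_
    refine ENNReal.le_sub_of_add_le_right ENNReal.coe_ne_top ?_
    calc (r : ℝ≥0∞) + ‖y‖₊ ≤ (ρ i : ℝ≥0∞) + ρ i := by
          gcongr
      _ ≤ 3 * ρ i := h23 _
      _ ≤ R i := (hρR i).le
  · intro n
    -- coefficient bound via the change of origin estimates
    have key : (‖(p i).changeOrigin y n‖₊ : ℝ≥0∞) * (r : ℝ≥0∞) ^ n ≤ (D i : ℝ≥0∞) := by
      have h1 : (‖(p i).changeOrigin y n‖₊ : ℝ≥0∞) ≤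
          ∑' u : Σ l : ℕ, { t : Finset (Fin (n + l)) // t.card = l },
            (‖p i (n + u.1)‖₊ : ℝ≥0∞) * (‖y‖₊ : ℝ≥0∞) ^ u.1 := by
        have := (p i).nnnorm_changeOrigin_le n hyrad
        have hsum2 := (p i).changeOriginSeries_summable_aux₂ hyrad n
        calc (‖(p i).changeOrigin y n‖₊ : ℝ≥0∞)
            ≤ ((∑' u : Σ l : ℕ, { t : Finset (Fin (n + l)) // t.card = l },
              ‖p i (n + u.1)‖₊ * ‖y‖₊ ^ u.1 : ℝ≥0) : ℝ≥0∞) := ENNReal.coe_le_coe.2 this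
          _ = ∑' u : Σ l : ℕ, { t : Finset (Fin (n + l)) // t.card = l },
              (‖p i (n + u.1)‖₊ : ℝ≥0∞) * (‖y‖₊ : ℝ≥0∞) ^ u.1 := by
              rw [ENNReal.coe_tsum hsum2]
              push_cast
              rfl
      calc (‖(p i).changeOrigin y n‖₊ : ℝ≥0∞) * (r : ℝ≥0∞) ^ n
          ≤ (∑' u : Σ l : ℕ, { t : Finset (Fin (n + l)) // t.card = l },
              (‖p i (n + u.1)‖₊ : ℝ≥0∞) * (‖y‖₊ : ℝ≥0∞) ^ u.1) * (ρ i : ℝ≥0∞) ^ n := by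
            gcongr
        _ = ∑' u : Σ l : ℕ, { t : Finset (Fin (n + l)) // t.card = l },
              (‖p i (n + u.1)‖₊ : ℝ≥0∞) * (‖y‖₊ : ℝ≥0∞) ^ u.1 * (ρ i : ℝ≥0∞) ^ n := by
            rw [ENNReal.tsum_mul_right]
        _ ≤ ∑' u : Σ l : ℕ, { t : Finset (Fin (n + l)) // t.card = l },
              (‖p i (n + u.1)‖₊ : ℝ≥0∞) * (ρ i : ℝ≥0∞) ^ u.1 * (ρ i : ℝ≥0∞) ^ n := by
            gcongr with u
        _ ≤ ∑' u : Σ k l : ℕ, { t : Finset (Fin (k + l)) // t.card = l },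
              (‖p i (u.1 + u.2.1)‖₊ : ℝ≥0∞) * (ρ i : ℝ≥0∞) ^ u.2.1 * (ρ i : ℝ≥0∞) ^ u.1 := by
            rw [ENNReal.tsum_sigma'
              (fun u : Σ k l : ℕ, { t : Finset (Fin (k + l)) // t.card = l } =>
                (‖p i (u.1 + u.2.1)‖₊ : ℝ≥0∞) * (ρ i : ℝ≥0∞) ^ u.2.1 * (ρ i : ℝ≥0∞) ^ u.1)]
            exact ENNReal.le_tsum n
        _ = (D i : ℝ≥0∞) := by
            rw [hD_def, ENNReal.coe_tsum (hsum i)]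
            push_cast
            rfl
    have key2 : (‖(p i).changeOrigin y n‖₊ * r ^ n : ℝ≥0) ≤ D i := by
      rw [← ENNReal.coe_le_coe]
      push_cast
      exact key
    have key3 : ‖(p i).changeOrigin y n‖ * (r : ℝ) ^ n ≤ (D i : ℝ) := by
      exact_mod_cast key2
    exact key3.trans (Finset.le_sup' (fun j => ((D j : ℝ) : ℝ)) hi)

/-- The coefficients of any power series of `f` at a point are the Taylor coefficients. -/
lemma coeff_eq_taylor {σ : ℝ → ℝ} {q : FormalMultilinearSeries ℝ ℝ ℝ} {t₀ : ℝ}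
    {R : ℝ≥0∞} (hq : HasFPowerSeriesOnBall σ q t₀ R) (n : ℕ) :
    q.coeff n = (n ! : ℝ)⁻¹ * iteratedDeriv n σ t₀ := by
  have h := hq.factorial_smul (1 : ℝ) n
  rw [iteratedDeriv_eq_iteratedFDeriv]
  have hco : q n (fun _ => (1 : ℝ)) = q.coeff n := rfl
  rw [hco, nsmul_eq_mul] at h
  rw [← h]
  field_simp

/-- Analyticity of the composition (Nemytskii) operator `f ↦ σ ∘ f` on `C(K, ℝ)`. -/
lemma analyticAt_compLeft {K : Type*} [TopologicalSpace K] [CompactSpace K] [Nonempty K]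
    {σ : ℝ → ℝ} (hσ : AnalyticOnNhd ℝ σ Set.univ) (hσc : Continuous σ)
    (f₀ : C(K, ℝ)) :
    AnalyticAt ℝ (fun f : C(K, ℝ) => (⟨σ, hσc⟩ : C(ℝ, ℝ)).comp f) f₀ := by
  classical
  have hK' : IsCompact (Set.range f₀) := isCompact_range f₀.continuous
  obtain ⟨r, hr0, C, hC⟩ := uniform_taylor hσ hK'
  have hrpos : (0 : ℝ) < (r : ℝ) := hr0
  -- Taylor coefficient functions
  set c : ℕ → ℝ → ℝ := fun n t => (n ! : ℝ)⁻¹ * iteratedDeriv n σ t with hc_def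
  have hσC : ∀ m : ℕ, ContDiff ℝ (m : ℕ∞) σ :=
    fun m => contDiff_iff_contDiffAt.2 fun x => (hσ x (Set.mem_univ x)).contDiffAt
  have hc_cont : ∀ n, Continuous (c n) := by
    intro n
    exact continuous_const.mul ((hσC n).continuous_iteratedDeriv n le_rfl)
  have hbound : ∀ n, ∀ t ∈ Set.range f₀, |c n t| * (r : ℝ) ^ n ≤ C := by
    intro n t ht
    obtain ⟨q, hq, hqb⟩ := hC t ht
    have : c n t = q.coeff n := (coeff_eq_taylor hq n).symm
    rw [this]
    have : |q.coeff n| = ‖q n‖ := by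
      rw [q.norm_apply_eq_norm_coef]
      rfl
    rw [this]
    exact hqb n
  have hC0 : 0 ≤ C := by
    obtain ⟨x₀⟩ := (inferInstance : Nonempty K)
    have := hbound 0 (f₀ x₀) ⟨x₀, rfl⟩
    nlinarith [abs_nonneg (c 0 (f₀ x₀)), pow_pos hrpos 0]
  have hsum : ∀ t ∈ Set.range f₀, ∀ z : ℝ, |z| < (r : ℝ) →
      HasSum (fun n => c n t * z ^ n) (σ (t + z)) := by
    intro t ht z hz
    obtain ⟨q, hq, -⟩ := hC t ht
    have hmem : z ∈ Metric.eball (0 : ℝ) r := by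
      rw [Metric.mem_eball, edist_zero_right]
      exact_mod_cast (by rw [← NNReal.coe_lt_coe, coe_nnnorm, Real.norm_eq_abs]; exact hz :
        ‖z‖₊ < r)
    have := hq.hasSum hmem
    convert this using 2 with n
    case e'_3 => rfl
    rw [q.apply_eq_pow_smul_coeff, coeff_eq_taylor hq n, smul_eq_mul]
    ring
  -- the coefficient continuous maps
  set ψ : ℕ → C(K, ℝ) := fun n => ⟨fun x => c n (f₀ x), (hc_cont n).comp f₀.continuous⟩
    with hψ_def
  have hψn : ∀ n, ‖ψ n‖ ≤ C / (r : ℝ) ^ n := by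
    intro n
    refine (ContinuousMap.norm_le _ (by positivity)).2 fun x => ?_
    rw [le_div_iff₀ (by positivity)]
    exact hbound n (f₀ x) ⟨x, rfl⟩
  -- the formal power series
  set Q : FormalMultilinearSeries ℝ C(K, ℝ) C(K, ℝ) := fun n =>
    (ContinuousLinearMap.mul ℝ C(K, ℝ) (ψ n)).compContinuousMultilinearMap
      (ContinuousMultilinearMap.mkPiAlgebraFin ℝ n C(K, ℝ)) with hQ_def
  have hQapply : ∀ n (g : C(K, ℝ)), Q n (fun _ => g) = ψ n * g ^ n := by
    intro n g
    rw [hQ_def]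
    simp only [ContinuousLinearMap.compContinuousMultilinearMap_coe, Function.comp_apply,
      ContinuousMultilinearMap.mkPiAlgebraFin_apply, ContinuousLinearMap.mul_apply']
    congr 1
    rw [List.ofFn_const, List.prod_replicate]
  have hQn : ∀ n, ‖Q n‖ ≤ C / (r : ℝ) ^ n := by
    intro n
    rw [hQ_def]
    set A := ContinuousLinearMap.mul ℝ C(K, ℝ) (ψ n) with hA_def
    set B := ContinuousMultilinearMap.mkPiAlgebraFin ℝ n C(K, ℝ) with hB_def
    calc ‖A.compContinuousMultilinearMap B‖
        ≤ ‖A‖ * ‖B‖ :=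
          ContinuousLinearMap.norm_compContinuousMultilinearMap_le _ _
      _ ≤ ‖ψ n‖ * 1 := by
          gcongr
          · exact ContinuousLinearMap.opNorm_mul_apply_le _ _ _
          · exact le_of_eq (ContinuousMultilinearMap.norm_mkPiAlgebraFin)
      _ ≤ C / (r : ℝ) ^ n := by rw [mul_one]; exact hψn n
  -- evaluation maps
  have heval : ∀ x : K, ∃ E : C(K, ℝ) →L[ℝ] ℝ, ∀ f : C(K, ℝ), E f = f x := by
    intro x
    refine ⟨{ toFun := fun f => f x
              map_add' := fun f g => rfl
              map_smul' := fun m f => rfl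
              cont := continuous_eval_const x }, fun f => rfl⟩
  choose Ev hEv using heval
  -- the power series expansion
  have hball : HasFPowerSeriesOnBall
      (fun f : C(K, ℝ) => (⟨σ, hσc⟩ : C(ℝ, ℝ)).comp f) Q f₀ r := by
    constructor
    · apply FormalMultilinearSeries.le_radius_of_bound _ C
      intro n
      calc ‖Q n‖ * (r : ℝ) ^ n ≤ (C / (r : ℝ) ^ n) * (r : ℝ) ^ n := by
            gcongr
            exact hQn n
        _ = C := div_mul_cancel₀ _ (by positivity)
    · exact_mod_cast hr0
    · intro g hg
      have hgn : ‖g‖ < (r : ℝ) := by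
        rw [EMetric.mem_ball, edist_zero_right] at hg
        exact_mod_cast (by exact_mod_cast hg : ‖g‖₊ < r)
      -- summability
      have hgn0 : 0 ≤ ‖g‖ := norm_nonneg g
      have hterm : ∀ n, ‖Q n (fun _ => g)‖ ≤ C * (‖g‖ / (r : ℝ)) ^ n := by
        intro n
        calc ‖Q n (fun _ => g)‖ ≤ ‖Q n‖ * ∏ _i : Fin n, ‖g‖ :=
              (Q n).le_opNorm _
          _ = ‖Q n‖ * ‖g‖ ^ n := by rw [Finset.prod_const, Finset.card_univ, Fintype.card_fin]
          _ ≤ (C / (r : ℝ) ^ n) * ‖g‖ ^ n := by gcongr; exact hQn n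
          _ = C * (‖g‖ / (r : ℝ)) ^ n := by rw [div_pow]; ring
      have hsummable : Summable fun n => Q n fun _ => g := by
        apply Summable.of_norm
        apply Summable.of_nonneg_of_le (fun n => norm_nonneg _) hterm
        apply Summable.mul_left
        apply summable_geometric_of_lt_one (by positivity)
        rw [div_lt_one hrpos]
        exact hgn
      obtain ⟨S, hS⟩ := hsummable
      have hSx : ∀ x : K, S x = σ (f₀ x + g x) := by
        intro x
        have h1 : HasSum (fun n => Ev x (Q n fun _ => g)) (Ev x S) := (Ev x).hasSum hS
        have h2 : HasSum (fun n => c n (f₀ x) * (g x) ^ n) (S x) := by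
          have : (fun n => Ev x (Q n fun _ => g)) = fun n => c n (f₀ x) * (g x) ^ n := by
            funext n
            rw [hEv, hQapply]
            simp [hψ_def]
          rw [this, hEv] at h1
          exact h1
        have h3 : HasSum (fun n => c n (f₀ x) * (g x) ^ n) (σ (f₀ x + g x)) := by
          apply hsum (f₀ x) ⟨x, rfl⟩
          calc |g x| ≤ ‖g‖ := by
                rw [← Real.norm_eq_abs]
                exact g.norm_coe_le_norm x
            _ < (r : ℝ) := hgn
        exact h2.unique h3
      have hSeq : S = (⟨σ, hσc⟩ : C(ℝ, ℝ)).comp (f₀ + g) := by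
        ext x
        rw [hSx x]
        simp
      rw [hSeq] at hS
      exact hS
  exact hball.analyticAt

end Aux

/-- **Real analyticity of `Γ`.** Let `X ⊆ ℝ^d` be compact, `π` a finite Borel measure
on `X`, `σ : ℝ → ℝ` real analytic and bounded, and let `h, Z` be bounded measurable
functions on `X`. Then `Γ(w) = ∫_X h(x) σ'(Z(x)) σ(w·x) π(dx)` is real analytic on `ℝ^d`. -/
theorem gamma_real_analytic
    (d : ℕ) (SX : Set (EuclideanSpace ℝ (Fin d))) (hSX : IsCompact SX)
    (π : Measure (EuclideanSpace ℝ (Fin d))) (hπ : IsFiniteMeasure π)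
    (σ : ℝ → ℝ) (hσan : AnalyticOnNhd ℝ σ Set.univ) (hσb : ∃ B, ∀ z, |σ z| ≤ B)
    (h : EuclideanSpace ℝ (Fin d) → ℝ) (hh : Measurable h)
    (hhb : ∃ M, ∀ x ∈ SX, |h x| ≤ M)
    (Z : EuclideanSpace ℝ (Fin d) → ℝ) (hZ : Measurable Z)
    (hZb : ∃ M, ∀ x ∈ SX, |Z x| ≤ M) :
    AnalyticOnNhd ℝ
      (fun w : EuclideanSpace ℝ (Fin d) =>
        ∫ x in SX, h x * deriv σ (Z x) * σ (⟪w, x⟫) ∂π)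
      Set.univ := by
  classical
  rcases SX.eq_empty_or_nonempty with hSXe | hSXne
  · subst hSXe
    simp only [Measure.restrict_empty, integral_zero_measure]
    exact fun w _ => analyticAt_const
  -- basic setup
  have hσc : Continuous σ := by
    rw [← continuousOn_univ]
    exact hσan.continuousOn
  haveI hKcs : CompactSpace ↥SX := isCompact_iff_compactSpace.1 hSX
  haveI hKne : Nonempty ↥SX := hSXne.to_subtype
  have hSXm : MeasurableSet SX := hSX.isClosed.measurableSet
  -- bound on the norms of points of SX
  obtain ⟨x₀, _, hx₀⟩ := hSX.exists_isMaxOn hSXne continuous_norm.continuousOn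
  set Rb : ℝ := ‖x₀‖ with hRb_def
  have hRb0 : 0 ≤ Rb := norm_nonneg _
  -- the continuous linear map T
  set T : EuclideanSpace ℝ (Fin d) →L[ℝ] C(↥SX, ℝ) :=
    LinearMap.mkContinuous
      { toFun := fun w => ⟨fun x => ⟪w, (x : EuclideanSpace ℝ (Fin d))⟫,
          (continuous_const.inner continuous_id).comp continuous_subtype_val⟩
        map_add' := by
          intro w₁ w₂
          ext x
          simp [inner_add_left]
        map_smul' := by
          intro m w
          ext x
          simp [inner_smul_left] }
      Rb
      (by
        intro w
        refine ContinuousMap.norm_le _ (by positivity) |>.2 fun x => ?_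
        calc ‖⟪w, (x : EuclideanSpace ℝ (Fin d))⟫‖ ≤ ‖w‖ * ‖(x : EuclideanSpace ℝ (Fin d))‖ :=
              norm_inner_le_norm _ _
          _ ≤ ‖w‖ * Rb := by
              gcongr
              exact hx₀ x.2
          _ = Rb * ‖w‖ := by ring) with hT_def
  have hTw : ∀ (w : EuclideanSpace ℝ (Fin d)) (x : ↥SX),
      (T w) x = ⟪w, (x : EuclideanSpace ℝ (Fin d))⟫ := fun w x => rfl
  -- the weight function
  set g : EuclideanSpace ℝ (Fin d) → ℝ := fun x => h x * deriv σ (Z x) with hg_def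
  have hdc : Continuous (deriv σ) := by
    rw [← continuousOn_univ]
    exact (hσan.deriv).continuousOn
  have hgm : Measurable g := hh.mul (hdc.measurable.comp hZ)
  obtain ⟨M₁, hM₁⟩ := hhb
  obtain ⟨M₂, hM₂⟩ := hZb
  have hM₂0 : 0 ≤ M₂ := (abs_nonneg _).trans (hM₂ _ hSXne.choose_spec)
  obtain ⟨z₀, _, hz₀⟩ := (isCompact_Icc (a := -M₂) (b := M₂)).exists_isMaxOn
    ⟨0, by constructor <;> linarith⟩
    (continuous_abs.comp hdc).continuousOn
  set M₃ : ℝ := |deriv σ z₀| with hM₃_def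
  have hgb : ∀ x ∈ SX, |g x| ≤ M₁ * M₃ := by
    intro x hx
    rw [hg_def, abs_mul]
    have h1 := hM₁ x hx
    have h2 : |deriv σ (Z x)| ≤ M₃ := hz₀ (by
      have := hM₂ x hx
      rw [abs_le] at this
      exact ⟨this.1, this.2⟩)
    have h3 : (0:ℝ) ≤ |h x| := abs_nonneg _
    have h4 : (0:ℝ) ≤ |deriv σ (Z x)| := abs_nonneg _
    nlinarith
  -- the measure on the subtype
  set μ : Measure ↥SX := π.comap Subtype.val with hμ_def
  haveI hμfin : IsFiniteMeasure μ := by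
    constructor
    rw [hμ_def, (MeasurableEmbedding.subtype_coe hSXm).comap_apply]
    exact measure_lt_top π _
  -- integrability
  have hint : ∀ f : C(↥SX, ℝ), Integrable (fun y : ↥SX => g ↑y * f y) μ := by
    intro f
    have hm : AEStronglyMeasurable (fun y : ↥SX => g ↑y * f y) μ :=
      ((hgm.comp measurable_subtype_coe).mul f.continuous.measurable).aestronglyMeasurable
    refine ⟨hm, ?_⟩
    apply MeasureTheory.HasFiniteIntegral.of_bounded
      (C := M₁ * M₃ * ‖f‖)
    filter_upwards with y
    rw [Real.norm_eq_abs, abs_mul]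
    have h1 := hgb ↑y y.2
    have h2 : |f y| ≤ ‖f‖ := by
      rw [← Real.norm_eq_abs]
      exact f.norm_coe_le_norm y
    have h3 : (0:ℝ) ≤ |g ↑y| := abs_nonneg _
    have h4 : (0:ℝ) ≤ |f y| := abs_nonneg _
    nlinarith
  -- the continuous linear functional L
  set L : C(↥SX, ℝ) →L[ℝ] ℝ :=
    LinearMap.mkContinuous
      { toFun := fun f => ∫ y, g ↑y * f y ∂μ
        map_add' := by
          intro f₁ f₂
          simp only [ContinuousMap.add_apply]
          rw [← integral_add (hint f₁) (hint f₂)]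
          congr 1
          funext y
          ring
        map_smul' := by
          intro m f
          simp only [ContinuousMap.smul_apply, smul_eq_mul, RingHom.id_apply]
          rw [← integral_const_mul]
          congr 1
          funext y
          ring }
      (M₁ * M₃ * (μ Set.univ).toReal)
      (by
        intro f
        simp only [LinearMap.coe_mk, AddHom.coe_mk]
        calc ‖∫ y, g ↑y * f y ∂μ‖ ≤ (M₁ * M₃ * ‖f‖) * (μ Set.univ).toReal := by
              apply norm_integral_le_of_norm_le_const
              filter_upwards with y
              rw [Real.norm_eq_abs, abs_mul]
              have h1 := hgb ↑y y.2
              have h2 : |f y| ≤ ‖f‖ := by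
                rw [← Real.norm_eq_abs]
                exact f.norm_coe_le_norm y
              have h3 : (0:ℝ) ≤ |g ↑y| := abs_nonneg _
              have h4 : (0:ℝ) ≤ |f y| := abs_nonneg _
              nlinarith
          _ = M₁ * M₃ * (μ Set.univ).toReal * ‖f‖ := by ring) with hL_def
  -- rewrite the function as a composition
  have hrw : (fun w : EuclideanSpace ℝ (Fin d) =>
      ∫ x in SX, h x * deriv σ (Z x) * σ (⟪w, x⟫) ∂π) =
      fun w => L ((⟨σ, hσc⟩ : C(ℝ, ℝ)).comp (T w)) := by
    funext w
    have : L ((⟨σ, hσc⟩ : C(ℝ, ℝ)).comp (T w)) =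
        ∫ y : ↥SX, g ↑y * σ (⟪w, (y : EuclideanSpace ℝ (Fin d))⟫) ∂μ := rfl
    rw [this, hμ_def]
    rw [show (fun y : ↥SX => g ↑y * σ (⟪w, (y : EuclideanSpace ℝ (Fin d))⟫)) =
      fun y : ↥SX => (fun x => g x * σ (⟪w, x⟫)) ↑y from rfl]
    rw [integral_subtype_comap hSXm (fun x => g x * σ (⟪w, x⟫))]
  rw [hrw]
  -- conclude by composition of analytic maps
  intro w₀ _
  have h1 : AnalyticAt ℝ (fun f : C(↥SX, ℝ) => (⟨σ, hσc⟩ : C(ℝ, ℝ)).comp f) (T w₀) :=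
    analyticAt_compLeft hσan hσc (T w₀)
  have h2 : AnalyticAt ℝ T w₀ := T.analyticAt w₀
  have h3 : AnalyticAt ℝ L ((⟨σ, hσc⟩ : C(ℝ, ℝ)).comp (T w₀)) := L.analyticAt _
  have h12 := h1.comp h2
  simp only [Function.comp_def] at h12
  have h4 : AnalyticAt ℝ
      (⇑L ∘ fun w : EuclideanSpace ℝ (Fin d) => (⟨σ, hσc⟩ : C(ℝ, ℝ)).comp (T w)) w₀ :=
    AnalyticAt.comp h3 h12
  simp only [Function.comp_def] at h4
  exact h4
end

section
/- Let (C̃, W̃¹, W̃²) be a uniformly bounded solution on [0,1] of the limiting two-layer system with target data y = f(x) (i.e., π is concentrated on the graph of f), and write Θ_t for the parameter family at time t, so g_t(x) = g(x;Θ_t). Then t ↦ L̄(Θ_t) = ½ ∫_X (f(x) − g_t(x))² π_X(dx) is differentiable on [0,1] and for every t, d/dt L̄(Θ_t) = −[ ∫_C R1(Θ_t, c)² μ_c(dc) + ∫_{W¹} ‖R2(Θ_t, w)‖² μ_{W¹}(dw) + ∫_C ∫_{W¹} R3(Θ_t, c, w)² μ_{W¹}(dw) μ_c(dc) ] ≤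 0. In particular, the limiting loss L̄(Θ_t) is nonincreasing in t. -/
open MeasureTheory
open scoped RealInnerProductSpace BigOperators

/-- `ℝ^d` as a Euclidean space. -/
abbrev Euc (d : ℕ) := EuclideanSpace ℝ (Fin d)

/-- The quantity `Z̃_t^c(x) = ∫∫ W̃_t^{2,c,w,u} σ(W̃_t^{1,w}·x) μ_{W²}(du) μ_{W¹}(dw)`
of the limiting two-layer system. -/
noncomputable def limZ {d : ℕ} (σ : ℝ → ℝ) (μW1 : Measure (Euc d)) (μW2 : Measure ℝ)
    (W1t : ℝ → Euc d → Euc d) (W2t : ℝ → ℝ → Euc d → ℝ → ℝ)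
    (t c : ℝ) (x : Euc d) : ℝ :=
  ∫ w, (∫ u, W2t t c w u * σ (⟪W1t t w, x⟫) ∂μW2) ∂μW1

/-- The network output `g_t(x) = ∫ C̃_t^c σ(Z̃_t^c(x)) μ_c(dc)` of the limiting system. -/
noncomputable def limG {d : ℕ} (σ : ℝ → ℝ) (μc : Measure ℝ) (μW1 : Measure (Euc d))
    (μW2 : Measure ℝ) (Ct : ℝ → ℝ → ℝ) (W1t : ℝ → Euc d → Euc d)
    (W2t : ℝ → ℝ → Euc d → ℝ → ℝ) (t : ℝ) (x : Euc d) : ℝ :=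
  ∫ c, Ct t c * σ (limZ σ μW1 μW2 W1t W2t t c x) ∂μc

/-- The quantity `V_t^w(x) = ∫ C̃_t^c σ'(Z̃_t^c(x)) (∫ W̃_t^{2,c,w,u} μ_{W²}(du)) μ_c(dc)`
of the limiting system. -/
noncomputable def limV {d : ℕ} (σ : ℝ → ℝ) (μc : Measure ℝ) (μW1 : Measure (Euc d))
    (μW2 : Measure ℝ) (Ct : ℝ → ℝ → ℝ) (W1t : ℝ → Euc d → Euc d)
    (W2t : ℝ → ℝ → Euc d → ℝ → ℝ) (t : ℝ) (w : Euc d) (x : Euc d) : ℝ :=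
  ∫ c, Ct t c * deriv σ (limZ σ μW1 μW2 W1t W2t t c x) * (∫ u, W2t t c w u ∂μW2) ∂μc

/-- `(Ct, W1t, W2t)` is a solution of the limiting two-layer system on `[0,1]`:
continuity in time, joint measurability in the parameters, and the integral equations. -/
def IsLimitSolution {d : ℕ} (σ : ℝ → ℝ) (π : Measure (Euc d × ℝ))
    (μc : Measure ℝ) (μW1 : Measure (Euc d)) (μW2 : Measure ℝ)
    (SC : Set ℝ) (SW1 : Set (Euc d)) (SW2 : Set ℝ)
    (Ct : ℝ → ℝ → ℝ) (W1t : ℝ → Euc d → Euc d) (W2t : ℝ → ℝ → Euc d → ℝ → ℝ) : Prop :=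
  (∀ c ∈ SC, ContinuousOn (fun t => Ct t c) (Set.Icc 0 1)) ∧
  (∀ w ∈ SW1, ContinuousOn (fun t => W1t t w) (Set.Icc 0 1)) ∧
  (∀ c ∈ SC, ∀ w ∈ SW1, ∀ u ∈ SW2, ContinuousOn (fun t => W2t t c w u) (Set.Icc 0 1)) ∧
  (∀ t, Measurable (Ct t)) ∧
  (∀ t, Measurable (W1t t)) ∧
  (∀ t, Measurable (fun q : ℝ × Euc d × ℝ => W2t t q.1 q.2.1 q.2.2)) ∧
  (∀ t ∈ Set.Icc (0:ℝ) 1, ∀ c ∈ SC,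
    Ct t c = c + ∫ s in Set.Icc (0:ℝ) t,
      (∫ p, (p.2 - limG σ μc μW1 μW2 Ct W1t W2t s p.1) *
        σ (limZ σ μW1 μW2 W1t W2t s c p.1) ∂π)) ∧
  (∀ t ∈ Set.Icc (0:ℝ) 1, ∀ w ∈ SW1,
    W1t t w = w + ∫ s in Set.Icc (0:ℝ) t,
      (∫ p, ((p.2 - limG σ μc μW1 μW2 Ct W1t W2t s p.1) *
        limV σ μc μW1 μW2 Ct W1t W2t s w p.1 *
        deriv σ (⟪W1t s w, p.1⟫)) • p.1 ∂π)) ∧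
  (∀ t ∈ Set.Icc (0:ℝ) 1, ∀ c ∈ SC, ∀ w ∈ SW1, ∀ u ∈ SW2,
    W2t t c w u = u + ∫ s in Set.Icc (0:ℝ) t,
      (∫ p, (p.2 - limG σ μc μW1 μW2 Ct W1t W2t s p.1) * Ct s c *
        deriv σ (limZ σ μW1 μW2 W1t W2t s c p.1) * σ (⟪W1t s w, p.1⟫) ∂π))

/-- `R₁([Θ_t], c)` for the limiting system with target `f`. -/
noncomputable def limR1 {d : ℕ} (σ : ℝ → ℝ) (f : Euc d → ℝ)
    (πX : Measure (Euc d)) (SX : Set (Euc d))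
    (μc : Measure ℝ) (μW1 : Measure (Euc d)) (μW2 : Measure ℝ)
    (Ct : ℝ → ℝ → ℝ) (W1t : ℝ → Euc d → Euc d) (W2t : ℝ → ℝ → Euc d → ℝ → ℝ)
    (t c : ℝ) : ℝ :=
  ∫ x in SX, (f x - limG σ μc μW1 μW2 Ct W1t W2t t x) *
    σ (limZ σ μW1 μW2 W1t W2t t c x) ∂πX

/-- `R₂([Θ_t], w)` for the limiting system with target `f`. -/
noncomputable def limR2 {d : ℕ} (σ : ℝ → ℝ) (f : Euc d → ℝ)
    (πX : Measure (Euc d)) (SX : Set (Euc d))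
    (μc : Measure ℝ) (μW1 : Measure (Euc d)) (μW2 : Measure ℝ)
    (Ct : ℝ → ℝ → ℝ) (W1t : ℝ → Euc d → Euc d) (W2t : ℝ → ℝ → Euc d → ℝ → ℝ)
    (t : ℝ) (w : Euc d) : Euc d :=
  ∫ x in SX, ((f x - limG σ μc μW1 μW2 Ct W1t W2t t x) *
    limV σ μc μW1 μW2 Ct W1t W2t t w x * deriv σ (⟪W1t t w, x⟫)) • x ∂πX

/-- `R₃([Θ_t], c, w)` for the limiting system with target `f`. -/
noncomputable def limR3 {d : ℕ} (σ : ℝ → ℝ) (f : Euc d → ℝ)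
    (πX : Measure (Euc d)) (SX : Set (Euc d))
    (μc : Measure ℝ) (μW1 : Measure (Euc d)) (μW2 : Measure ℝ)
    (Ct : ℝ → ℝ → ℝ) (W1t : ℝ → Euc d → Euc d) (W2t : ℝ → ℝ → Euc d → ℝ → ℝ)
    (t c : ℝ) (w : Euc d) : ℝ :=
  ∫ x in SX, (f x - limG σ μc μW1 μW2 Ct W1t W2t t x) * Ct t c *
    deriv σ (limZ σ μW1 μW2 W1t W2t t c x) * σ (⟪W1t t w, x⟫) ∂πX



set_option maxHeartbeats 1000000



namespace LLD

lemma ae_mem_of_compl_null {α : Type*} [MeasurableSpace α] {μ : Measure α} {s : Set α}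
    (h : μ sᶜ = 0) : ∀ᵐ a ∂μ, a ∈ s := by
  rw [MeasureTheory.ae_iff]
  simpa [Set.compl_def] using h

lemma integrable_of_bdd {α E : Type*} [MeasurableSpace α] {μ : Measure α} [IsFiniteMeasure μ]
    [NormedAddCommGroup E] {h : α → E} {C : ℝ} (hm : AEStronglyMeasurable h μ)
    (hb : ∀ᵐ a ∂μ, ‖h a‖ ≤ C) : Integrable h μ :=
  Integrable.mono' (integrable_const C) hm hb

lemma norm_integral_le_of_bdd {α E : Type*} [MeasurableSpace α] {μ : Measure α}
    [IsProbabilityMeasure μ] [NormedAddCommGroup E] [NormedSpace ℝ E] {h : α → E} {C : ℝ}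
    (hb : ∀ᵐ a ∂μ, ‖h a‖ ≤ C) : ‖∫ a, h a ∂μ‖ ≤ C := by
  simpa using norm_integral_le_of_norm_le_const hb

lemma ae_prod_mem {α β : Type*} [MeasurableSpace α] [MeasurableSpace β]
    {μ : Measure α} {ν : Measure β} [SFinite ν] {s : Set α} {t : Set β}
    (hsm : MeasurableSet s) (htm : MeasurableSet t)
    (hs : μ sᶜ = 0) (ht : ν tᶜ = 0) : ∀ᵐ z ∂μ.prod ν, z.1 ∈ s ∧ z.2 ∈ t := by
  have h1 : ∀ᵐ z ∂μ.prod ν, z.1 ∈ s := by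
    rw [MeasureTheory.ae_iff]
    have : {z : α × β | ¬ z.1 ∈ s} = sᶜ ×ˢ (Set.univ : Set β) := by
      ext z; simp
    rw [this, Measure.prod_prod, hs, zero_mul]
  have h2 : ∀ᵐ z ∂μ.prod ν, z.2 ∈ t := by
    rw [MeasureTheory.ae_iff]
    have : {z : α × β | ¬ z.2 ∈ t} = (Set.univ : Set α) ×ˢ tᶜ := by
      ext z; simp
    rw [this, Measure.prod_prod, ht, mul_zero]
  exact h1.and h2

end LLD

namespace LLD
section Aux
variable {d : ℕ} (σ : ℝ → ℝ) (f : Euc d → ℝ)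
  (πX : Measure (Euc d)) (μc : Measure ℝ) (μW1 : Measure (Euc d)) (μW2 : Measure ℝ)
  (SX : Set (Euc d)) (SC : Set ℝ) (SW1 : Set (Euc d)) (SW2 : Set ℝ)
  (Ct : ℝ → ℝ → ℝ) (W1t : ℝ → Euc d → Euc d) (W2t : ℝ → ℝ → Euc d → ℝ → ℝ)
  [IsProbabilityMeasure πX] [IsProbabilityMeasure μc]
  [IsProbabilityMeasure μW1] [IsProbabilityMeasure μW2]

local notation "𝐙" => limZ σ μW1 μW2 W1t W2t
local notation "𝐆" => limG σ μc μW1 μW2 Ct W1t W2t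
local notation "𝐕" => limV σ μc μW1 μW2 Ct W1t W2t
local notation "𝓡₁" => limR1 σ f πX SX μc μW1 μW2 Ct W1t W2t
local notation "𝓡₂" => limR2 σ f πX SX μc μW1 μW2 Ct W1t W2t
local notation "𝓡₃" => limR3 σ f πX SX μc μW1 μW2 Ct W1t W2t

variable (hσc : Continuous σ) (hσ'c : Continuous (deriv σ))
  (hfm : Measurable f)
  (hCm : ∀ t, Measurable (Ct t)) (hW1m : ∀ t, Measurable (W1t t))
  (hW2m : ∀ t, Measurable (fun q : ℝ × Euc d × ℝ => W2t t q.1 q.2.1 q.2.2))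

include hσc hCm hW1m hW2m

omit hCm in
lemma mZ (t : ℝ) : Measurable (fun p : ℝ × Euc d => 𝐙 t p.1 p.2) := by
  have h0 : Measurable (fun q : ((ℝ × Euc d) × Euc d) × ℝ =>
      W2t t q.1.1.1 q.1.2 q.2 * σ ⟪W1t t q.1.2, q.1.1.2⟫) := by
    apply Measurable.mul
    · exact (hW2m t).comp
        (((measurable_fst.comp measurable_fst).comp measurable_fst).prodMk
          (((measurable_snd.comp measurable_fst)).prodMk measurable_snd))
    · exact hσc.measurable.comp
        (((hW1m t).comp (measurable_snd.comp measurable_fst)).inner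
          (measurable_snd.comp (measurable_fst.comp measurable_fst)))
  have h1 := h0.stronglyMeasurable.integral_prod_right' (ν := μW2)
  have h2 := h1.integral_prod_right' (ν := μW1)
  simpa [limZ] using h2.measurable

lemma mG (t : ℝ) : Measurable (fun x : Euc d => 𝐆 t x) := by
  have h0 : Measurable (fun q : Euc d × ℝ => Ct t q.2 * σ (𝐙 t q.2 q.1)) :=
    ((hCm t).comp measurable_snd).mul (hσc.measurable.comp
      ((mZ σ μW1 μW2 W1t W2t hσc hW1m hW2m t).comp (measurable_snd.prodMk measurable_fst)))
  have h1 := h0.stronglyMeasurable.integral_prod_right' (ν := μc)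
  simpa [limG] using h1.measurable

omit hσc hCm hW1m in
lemma mIu (t : ℝ) : Measurable (fun q : ℝ × Euc d => ∫ u, W2t t q.1 q.2 u ∂μW2) := by
  have h0 : Measurable (fun q : (ℝ × Euc d) × ℝ => W2t t q.1.1 q.1.2 q.2) :=
    (hW2m t).comp ((measurable_fst.comp measurable_fst).prodMk
      ((measurable_snd.comp measurable_fst).prodMk measurable_snd))
  exact (h0.stronglyMeasurable.integral_prod_right' (ν := μW2)).measurable

variable (hσ'm : Measurable (deriv σ))

include hσ'm in
lemma mV (t : ℝ) : Measurable (fun p : Euc d × Euc d => 𝐕 t p.1 p.2) := by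
  have h0 : Measurable (fun q : (Euc d × Euc d) × ℝ =>
      Ct t q.2 * deriv σ (𝐙 t q.2 q.1.2) * (∫ u, W2t t q.2 q.1.1 u ∂μW2)) := by
    refine (((hCm t).comp measurable_snd).mul ?_).mul ?_
    · exact hσ'm.comp ((mZ σ μW1 μW2 W1t W2t hσc hW1m hW2m t).comp
        (measurable_snd.prodMk (measurable_snd.comp measurable_fst)))
    · exact (mIu μW2 W2t hW2m t).comp
        (measurable_snd.prodMk (measurable_fst.comp measurable_fst))
  have h1 := h0.stronglyMeasurable.integral_prod_right' (ν := μc)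
  simpa [limV] using h1.measurable

include hfm in
lemma mR1 (t : ℝ) : Measurable (fun c : ℝ => 𝓡₁ t c) := by
  have h0 : Measurable (fun q : ℝ × Euc d =>
      (f q.2 - 𝐆 t q.2) * σ (𝐙 t q.1 q.2)) := by
    refine ((hfm.comp measurable_snd).sub
      ((mG σ μc μW1 μW2 Ct W1t W2t hσc hCm hW1m hW2m t).comp measurable_snd)).mul
      (hσc.measurable.comp ((mZ σ μW1 μW2 W1t W2t hσc hW1m hW2m t).comp measurable_id))
  have h1 := h0.stronglyMeasurable.integral_prod_right' (ν := πX.restrict SX)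
  simpa [limR1] using h1.measurable

include hfm hσ'm in
lemma mR2 (t : ℝ) : Measurable (fun w : Euc d => 𝓡₂ t w) := by
  have h0 : Measurable (fun q : Euc d × Euc d =>
      ((f q.2 - 𝐆 t q.2) * 𝐕 t q.1 q.2 * deriv σ ⟪W1t t q.1, q.2⟫) • q.2) := by
    refine Measurable.fun_smul ?_ measurable_snd
    refine (((hfm.comp measurable_snd).sub
      ((mG σ μc μW1 μW2 Ct W1t W2t hσc hCm hW1m hW2m t).comp measurable_snd)).mul
      ((mV σ μc μW1 μW2 Ct W1t W2t hσc hCm hW1m hW2m hσ'm t).comp measurable_id)).mul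
      (hσ'm.comp (((hW1m t).comp measurable_fst).inner measurable_snd))
  have h1 := h0.stronglyMeasurable.integral_prod_right' (ν := πX.restrict SX)
  simpa [limR2] using h1.measurable

include hfm hσ'm in
lemma mR3 (t : ℝ) : Measurable (fun p : ℝ × Euc d => 𝓡₃ t p.1 p.2) := by
  have h0 : Measurable (fun q : (ℝ × Euc d) × Euc d =>
      (f q.2 - 𝐆 t q.2) * Ct t q.1.1 * deriv σ (𝐙 t q.1.1 q.2) * σ ⟪W1t t q.1.2, q.2⟫) := by
    refine ((((hfm.comp measurable_snd).sub
      ((mG σ μc μW1 μW2 Ct W1t W2t hσc hCm hW1m hW2m t).comp measurable_snd)).mul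
      ((hCm t).comp (measurable_fst.comp measurable_fst))).mul
      (hσ'm.comp ((mZ σ μW1 μW2 W1t W2t hσc hW1m hW2m t).comp
        ((measurable_fst.comp measurable_fst).prodMk measurable_snd)))).mul
      (hσc.measurable.comp (((hW1m t).comp (measurable_snd.comp measurable_fst)).inner
        measurable_snd))
  have h1 := h0.stronglyMeasurable.integral_prod_right' (ν := πX.restrict SX)
  simpa [limR3] using h1.measurable

end Aux
end LLD


namespace LLD

/-- time derivative of `Z` -/
noncomputable def DZ {d : ℕ} (σ : ℝ → ℝ) (f : Euc d → ℝ)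
    (πX : Measure (Euc d)) (SX : Set (Euc d))
    (μc : Measure ℝ) (μW1 : Measure (Euc d)) (μW2 : Measure ℝ)
    (Ct : ℝ → ℝ → ℝ) (W1t : ℝ → Euc d → Euc d) (W2t : ℝ → ℝ → Euc d → ℝ → ℝ)
    (t c : ℝ) (x : Euc d) : ℝ :=
  ∫ z, (limR3 σ f πX SX μc μW1 μW2 Ct W1t W2t t c z.1 * σ ⟪W1t t z.1, x⟫ +
    W2t t c z.1 z.2 * (deriv σ ⟪W1t t z.1, x⟫ *
      ⟪limR2 σ f πX SX μc μW1 μW2 Ct W1t W2t t z.1, x⟫)) ∂(μW1.prod μW2)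

/-- time derivative of `g` -/
noncomputable def Dg {d : ℕ} (σ : ℝ → ℝ) (f : Euc d → ℝ)
    (πX : Measure (Euc d)) (SX : Set (Euc d))
    (μc : Measure ℝ) (μW1 : Measure (Euc d)) (μW2 : Measure ℝ)
    (Ct : ℝ → ℝ → ℝ) (W1t : ℝ → Euc d → Euc d) (W2t : ℝ → ℝ → Euc d → ℝ → ℝ)
    (t : ℝ) (x : Euc d) : ℝ :=
  ∫ c, (limR1 σ f πX SX μc μW1 μW2 Ct W1t W2t t c * σ (limZ σ μW1 μW2 W1t W2t t c x) +
    Ct t c * (deriv σ (limZ σ μW1 μW2 W1t W2t t c x) *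
      DZ σ f πX SX μc μW1 μW2 Ct W1t W2t t c x)) ∂μc

/-- dissipation functional -/
noncomputable def Phi {d : ℕ} (σ : ℝ → ℝ) (f : Euc d → ℝ)
    (πX : Measure (Euc d)) (SX : Set (Euc d))
    (μc : Measure ℝ) (μW1 : Measure (Euc d)) (μW2 : Measure ℝ)
    (Ct : ℝ → ℝ → ℝ) (W1t : ℝ → Euc d → Euc d) (W2t : ℝ → ℝ → Euc d → ℝ → ℝ)
    (t : ℝ) : ℝ :=
  (∫ c, (limR1 σ f πX SX μc μW1 μW2 Ct W1t W2t t c)^2 ∂μc)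
  + (∫ w, ‖limR2 σ f πX SX μc μW1 μW2 Ct W1t W2t t w‖^2 ∂μW1)
  + ∫ c, (∫ w, (limR3 σ f πX SX μc μW1 μW2 Ct W1t W2t t c w)^2 ∂μW1) ∂μc

section Aux
variable {d : ℕ} (σ : ℝ → ℝ) (f : Euc d → ℝ)
  (πX : Measure (Euc d)) (μc : Measure ℝ) (μW1 : Measure (Euc d)) (μW2 : Measure ℝ)
  (SX : Set (Euc d)) (SC : Set ℝ) (SW1 : Set (Euc d)) (SW2 : Set ℝ)
  (Ct : ℝ → ℝ → ℝ) (W1t : ℝ → Euc d → Euc d) (W2t : ℝ → ℝ → Euc d → ℝ → ℝ)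
  [IsProbabilityMeasure πX] [IsProbabilityMeasure μc]
  [IsProbabilityMeasure μW1] [IsProbabilityMeasure μW2]

local notation "𝐙" => limZ σ μW1 μW2 W1t W2t
local notation "𝐆" => limG σ μc μW1 μW2 Ct W1t W2t
local notation "𝐕" => limV σ μc μW1 μW2 Ct W1t W2t
local notation "𝓡₁" => limR1 σ f πX SX μc μW1 μW2 Ct W1t W2t
local notation "𝓡₂" => limR2 σ f πX SX μc μW1 μW2 Ct W1t W2t
local notation "𝓡₃" => limR3 σ f πX SX μc μW1 μW2 Ct W1t W2t
local notation "𝐃𝐙" => DZ σ f πX SX μc μW1 μW2 Ct W1t W2t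
local notation "𝐃𝐠" => Dg σ f πX SX μc μW1 μW2 Ct W1t W2t

variable (hσc : Continuous σ) (hσ'c : Continuous (deriv σ))
  (hfm : Measurable f)
  (hCm : ∀ t, Measurable (Ct t)) (hW1m : ∀ t, Measurable (W1t t))
  (hW2m : ∀ t, Measurable (fun q : ℝ × Euc d × ℝ => W2t t q.1 q.2.1 q.2.2))
  (hσ'm : Measurable (deriv σ))

include hσc hfm hCm hW1m hW2m hσ'm in
lemma mDZ (t : ℝ) : Measurable (fun p : ℝ × Euc d => 𝐃𝐙 t p.1 p.2) := by
  have h0 : Measurable (fun q : (ℝ × Euc d) × (Euc d × ℝ) =>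
      𝓡₃ t q.1.1 q.2.1 * σ ⟪W1t t q.2.1, q.1.2⟫ +
      W2t t q.1.1 q.2.1 q.2.2 * (deriv σ ⟪W1t t q.2.1, q.1.2⟫ * ⟪𝓡₂ t q.2.1, q.1.2⟫)) := by
    refine Measurable.add (Measurable.mul ?_ ?_) (Measurable.mul ?_ (Measurable.mul ?_ ?_))
    · exact (mR3 σ f πX μc μW1 μW2 SX Ct W1t W2t hσc hfm hCm hW1m hW2m hσ'm t).comp
        ((measurable_fst.comp measurable_fst).prodMk (measurable_fst.comp measurable_snd))
    · exact hσc.measurable.comp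
        (((hW1m t).comp (measurable_fst.comp measurable_snd)).inner
          (measurable_snd.comp measurable_fst))
    · exact (hW2m t).comp ((measurable_fst.comp measurable_fst).prodMk
        ((measurable_fst.comp measurable_snd).prodMk (measurable_snd.comp measurable_snd)))
    · exact hσ'm.comp (((hW1m t).comp (measurable_fst.comp measurable_snd)).inner
        (measurable_snd.comp measurable_fst))
    · exact ((mR2 σ f πX μc μW1 μW2 SX Ct W1t W2t hσc hfm hCm hW1m hW2m hσ'm t).comp
        (measurable_fst.comp measurable_snd)).inner (measurable_snd.comp measurable_fst)
  have h1 := h0.stronglyMeasurable.integral_prod_right' (ν := μW1.prod μW2)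
  simpa [DZ] using h1.measurable

include hσc hfm hCm hW1m hW2m hσ'm in
lemma mDg (t : ℝ) : Measurable (fun x : Euc d => 𝐃𝐠 t x) := by
  have h0 : Measurable (fun q : Euc d × ℝ =>
      𝓡₁ t q.2 * σ (𝐙 t q.2 q.1) +
      Ct t q.2 * (deriv σ (𝐙 t q.2 q.1) * 𝐃𝐙 t q.2 q.1)) := by
    refine Measurable.add (Measurable.mul ?_ ?_) (Measurable.mul ?_ (Measurable.mul ?_ ?_))
    · exact (mR1 σ f πX μc μW1 μW2 SX Ct W1t W2t hσc hfm hCm hW1m hW2m t).comp measurable_snd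
    · exact hσc.measurable.comp ((mZ σ μW1 μW2 W1t W2t hσc hW1m hW2m t).comp
        (measurable_snd.prodMk measurable_fst))
    · exact (hCm t).comp measurable_snd
    · exact hσ'm.comp ((mZ σ μW1 μW2 W1t W2t hσc hW1m hW2m t).comp
        (measurable_snd.prodMk measurable_fst))
    · exact (mDZ σ f πX μc μW1 μW2 SX Ct W1t W2t hσc hfm hCm hW1m hW2m hσ'm t).comp
        (measurable_snd.prodMk measurable_fst)
  have h1 := h0.stronglyMeasurable.integral_prod_right' (ν := μc)
  simpa [Dg] using h1.measurable

end Aux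
end LLD


namespace LLD

structure Hyp {d : ℕ} (σ : ℝ → ℝ) (f : Euc d → ℝ)
    (πX : Measure (Euc d)) (μc : Measure ℝ) (μW1 : Measure (Euc d)) (μW2 : Measure ℝ)
    (SX : Set (Euc d)) (SC : Set ℝ) (SW1 : Set (Euc d)) (SW2 : Set ℝ)
    (Ct : ℝ → ℝ → ℝ) (W1t : ℝ → Euc d → Euc d) (W2t : ℝ → ℝ → Euc d → ℝ → ℝ)
    (M B Mf Kx : ℝ) : Prop where
  pX : IsProbabilityMeasure πX
  pc : IsProbabilityMeasure μc
  pw1 : IsProbabilityMeasure μW1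
  pw2 : IsProbabilityMeasure μW2
  hσ : ContDiff ℝ 2 σ
  hB : ∀ z, |σ z| ≤ B ∧ |deriv σ z| ≤ B
  hfm : Measurable f
  hMf : ∀ x ∈ SX, |f x| ≤ Mf
  hKx : ∀ x ∈ SX, ‖x‖ ≤ Kx
  hM : ∀ t ∈ Set.Icc (0:ℝ) 1, (∀ c ∈ SC, |Ct t c| ≤ M) ∧ (∀ w ∈ SW1, ‖W1t t w‖ ≤ M) ∧
        (∀ c ∈ SC, ∀ w ∈ SW1, ∀ u ∈ SW2, |W2t t c w u| ≤ M)
  h0B : 0 ≤ B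
  h0M : 0 ≤ M
  h0Mf : 0 ≤ Mf
  h0Kx : 0 ≤ Kx
  hXs : πX SXᶜ = 0
  hcs : μc SCᶜ = 0
  hw1s : μW1 SW1ᶜ = 0
  hw2s : μW2 SW2ᶜ = 0
  hSXm : MeasurableSet SX
  hSCm : MeasurableSet SC
  hSW1m : MeasurableSet SW1
  hSW2m : MeasurableSet SW2
  hCcont : ∀ c ∈ SC, ContinuousOn (fun t => Ct t c) (Set.Icc 0 1)
  hW1cont : ∀ w ∈ SW1, ContinuousOn (fun t => W1t t w) (Set.Icc 0 1)
  hW2cont : ∀ c ∈ SC, ∀ w ∈ SW1, ∀ u ∈ SW2, ContinuousOn (fun t => W2t t c w u) (Set.Icc 0 1)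
  hCm : ∀ t, Measurable (Ct t)
  hW1m : ∀ t, Measurable (W1t t)
  hW2m : ∀ t, Measurable (fun q : ℝ × Euc d × ℝ => W2t t q.1 q.2.1 q.2.2)
  heqC : ∀ t ∈ Set.Icc (0:ℝ) 1, ∀ c ∈ SC, Ct t c = c + ∫ s in Set.Icc (0:ℝ) t,
    limR1 σ f πX SX μc μW1 μW2 Ct W1t W2t s c
  heqW1 : ∀ t ∈ Set.Icc (0:ℝ) 1, ∀ w ∈ SW1, W1t t w = w + ∫ s in Set.Icc (0:ℝ) t,
    limR2 σ f πX SX μc μW1 μW2 Ct W1t W2t s w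
  heqW2 : ∀ t ∈ Set.Icc (0:ℝ) 1, ∀ c ∈ SC, ∀ w ∈ SW1, ∀ u ∈ SW2,
    W2t t c w u = u + ∫ s in Set.Icc (0:ℝ) t,
      limR3 σ f πX SX μc μW1 μW2 Ct W1t W2t s c w

section Aux
variable {d : ℕ} {σ : ℝ → ℝ} {f : Euc d → ℝ}
  {πX : Measure (Euc d)} {μc : Measure ℝ} {μW1 : Measure (Euc d)} {μW2 : Measure ℝ}
  {SX : Set (Euc d)} {SC : Set ℝ} {SW1 : Set (Euc d)} {SW2 : Set ℝ}
  {Ct : ℝ → ℝ → ℝ} {W1t : ℝ → Euc d → Euc d} {W2t : ℝ → ℝ → Euc d → ℝ → ℝ}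
  {M B Mf Kx : ℝ}
  (H : Hyp σ f πX μc μW1 μW2 SX SC SW1 SW2 Ct W1t W2t M B Mf Kx)

local notation "𝐙" => limZ σ μW1 μW2 W1t W2t
local notation "𝐆" => limG σ μc μW1 μW2 Ct W1t W2t
local notation "𝐕" => limV σ μc μW1 μW2 Ct W1t W2t
local notation "𝓡₁" => limR1 σ f πX SX μc μW1 μW2 Ct W1t W2t
local notation "𝓡₂" => limR2 σ f πX SX μc μW1 μW2 Ct W1t W2t
local notation "𝓡₃" => limR3 σ f πX SX μc μW1 μW2 Ct W1t W2t
local notation "𝐃𝐙" => DZ σ f πX SX μc μW1 μW2 Ct W1t W2t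
local notation "𝐃𝐠" => Dg σ f πX SX μc μW1 μW2 Ct W1t W2t

include H

lemma hσc : Continuous σ := H.hσ.continuous

lemma hσ'c : Continuous (deriv σ) := H.hσ.continuous_deriv one_le_two

lemma hσd : ∀ z, HasDerivAt σ (deriv σ z) z :=
  fun z => ((H.hσ.differentiable two_ne_zero) z).hasDerivAt

lemma resX : πX.restrict SX = πX :=
  Measure.restrict_eq_self_of_ae_mem (ae_mem_of_compl_null H.hXs)

lemma aeX : ∀ᵐ x ∂πX, x ∈ SX := ae_mem_of_compl_null H.hXs
lemma aeC : ∀ᵐ c ∂μc, c ∈ SC := ae_mem_of_compl_null H.hcs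
lemma aeW1 : ∀ᵐ w ∂μW1, w ∈ SW1 := ae_mem_of_compl_null H.hw1s
lemma aeW2 : ∀ᵐ u ∂μW2, u ∈ SW2 := ae_mem_of_compl_null H.hw2s

lemma r1eq (t c : ℝ) : 𝓡₁ t c = ∫ x, (f x - 𝐆 t x) * σ (𝐙 t c x) ∂πX := by
  simp only [limR1]; rw [resX H]

lemma r2eq (t : ℝ) (w : Euc d) :
    𝓡₂ t w = ∫ x, ((f x - 𝐆 t x) * 𝐕 t w x * deriv σ ⟪W1t t w, x⟫) • x ∂πX := by
  simp only [limR2]; rw [resX H]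

lemma r3eq (t c : ℝ) (w : Euc d) :
    𝓡₃ t c w = ∫ x, (f x - 𝐆 t x) * Ct t c * deriv σ (𝐙 t c x) * σ ⟪W1t t w, x⟫ ∂πX := by
  simp only [limR3]; rw [resX H]

lemma bZ : ∃ C, 0 ≤ C ∧ ∀ t ∈ Set.Icc (0:ℝ) 1, ∀ c ∈ SC, ∀ x : Euc d,
    |𝐙 t c x| ≤ C := by
  haveI := H.pw1; haveI := H.pw2
  refine ⟨M * B, mul_nonneg H.h0M H.h0B, fun t ht c hc x => ?_⟩
  rw [← Real.norm_eq_abs]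
  refine norm_integral_le_of_bdd ?_
  filter_upwards [aeW1 H] with w hw
  refine norm_integral_le_of_bdd ?_
  filter_upwards [aeW2 H] with u hu
  rw [Real.norm_eq_abs, abs_mul]
  exact mul_le_mul ((H.hM t ht).2.2 c hc w hw u hu) (H.hB _).1 (abs_nonneg _) H.h0M

lemma bG : ∃ C, 0 ≤ C ∧ ∀ t ∈ Set.Icc (0:ℝ) 1, ∀ x : Euc d, |𝐆 t x| ≤ C := by
  haveI := H.pc
  refine ⟨M * B, mul_nonneg H.h0M H.h0B, fun t ht x => ?_⟩
  rw [← Real.norm_eq_abs]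
  refine norm_integral_le_of_bdd ?_
  filter_upwards [aeC H] with c hc
  rw [Real.norm_eq_abs, abs_mul]
  exact mul_le_mul ((H.hM t ht).1 c hc) (H.hB _).1 (abs_nonneg _) H.h0M

lemma bE : ∃ C, 0 ≤ C ∧ ∀ t ∈ Set.Icc (0:ℝ) 1, ∀ x ∈ SX, |f x - 𝐆 t x| ≤ C := by
  obtain ⟨C, hC0, hC⟩ := bG H
  refine ⟨Mf + C, add_nonneg H.h0Mf hC0, fun t ht x hx => ?_⟩
  calc |f x - 𝐆 t x| ≤ |f x| + |𝐆 t x| := abs_sub _ _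
    _ ≤ Mf + C := add_le_add (H.hMf x hx) (hC t ht x)

lemma bIu : ∃ C, 0 ≤ C ∧ ∀ t ∈ Set.Icc (0:ℝ) 1, ∀ c ∈ SC, ∀ w ∈ SW1,
    |∫ u, W2t t c w u ∂μW2| ≤ C := by
  haveI := H.pw2
  refine ⟨M, H.h0M, fun t ht c hc w hw => ?_⟩
  rw [← Real.norm_eq_abs]
  refine norm_integral_le_of_bdd ?_
  filter_upwards [aeW2 H] with u hu
  rw [Real.norm_eq_abs]
  exact (H.hM t ht).2.2 c hc w hw u hu

lemma bV : ∃ C, 0 ≤ C ∧ ∀ t ∈ Set.Icc (0:ℝ) 1, ∀ w ∈ SW1, ∀ x : Euc d,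
    |𝐕 t w x| ≤ C := by
  haveI := H.pc
  obtain ⟨CI, hCI0, hCI⟩ := bIu H
  refine ⟨M * B * CI, mul_nonneg (mul_nonneg H.h0M H.h0B) hCI0, fun t ht w hw x => ?_⟩
  rw [← Real.norm_eq_abs]
  refine norm_integral_le_of_bdd ?_
  filter_upwards [aeC H] with c hc
  rw [Real.norm_eq_abs, abs_mul, abs_mul]
  refine mul_le_mul (mul_le_mul ((H.hM t ht).1 c hc) (H.hB _).2 (abs_nonneg _) H.h0M)
    (hCI t ht c hc w hw) (abs_nonneg _) (mul_nonneg H.h0M H.h0B)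

lemma bR1 : ∃ C, 0 ≤ C ∧ ∀ t ∈ Set.Icc (0:ℝ) 1, ∀ c : ℝ, |𝓡₁ t c| ≤ C := by
  haveI := H.pX
  obtain ⟨CE, hCE0, hCE⟩ := bE H
  refine ⟨CE * B, mul_nonneg hCE0 H.h0B, fun t ht c => ?_⟩
  rw [r1eq H, ← Real.norm_eq_abs]
  refine norm_integral_le_of_bdd ?_
  filter_upwards [aeX H] with x hx
  rw [Real.norm_eq_abs, abs_mul]
  exact mul_le_mul (hCE t ht x hx) (H.hB _).1 (abs_nonneg _) hCE0

lemma bR2 : ∃ C, 0 ≤ C ∧ ∀ t ∈ Set.Icc (0:ℝ) 1, ∀ w ∈ SW1, ‖𝓡₂ t w‖ ≤ C := by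
  haveI := H.pX
  obtain ⟨CE, hCE0, hCE⟩ := bE H
  obtain ⟨CV, hCV0, hCV⟩ := bV H
  refine ⟨CE * CV * B * Kx, mul_nonneg (mul_nonneg (mul_nonneg hCE0 hCV0) H.h0B) H.h0Kx, fun t ht w hw => ?_⟩
  rw [r2eq H]
  refine norm_integral_le_of_bdd ?_
  filter_upwards [aeX H] with x hx
  rw [norm_smul, Real.norm_eq_abs, abs_mul, abs_mul]
  refine mul_le_mul (mul_le_mul (mul_le_mul (hCE t ht x hx) (hCV t ht w hw x)
    (abs_nonneg _) hCE0) (H.hB _).2 (abs_nonneg _) (mul_nonneg hCE0 hCV0))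
    (H.hKx x hx) (norm_nonneg _) (mul_nonneg (mul_nonneg hCE0 hCV0) H.h0B)

lemma bR3 : ∃ C, 0 ≤ C ∧ ∀ t ∈ Set.Icc (0:ℝ) 1, ∀ c ∈ SC, ∀ w : Euc d,
    |𝓡₃ t c w| ≤ C := by
  haveI := H.pX
  obtain ⟨CE, hCE0, hCE⟩ := bE H
  refine ⟨CE * M * B * B, mul_nonneg (mul_nonneg (mul_nonneg hCE0 H.h0M) H.h0B) H.h0B, fun t ht c hc w => ?_⟩
  rw [r3eq H, ← Real.norm_eq_abs]
  refine norm_integral_le_of_bdd ?_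
  filter_upwards [aeX H] with x hx
  rw [Real.norm_eq_abs, abs_mul, abs_mul, abs_mul]
  refine mul_le_mul (mul_le_mul (mul_le_mul (hCE t ht x hx) ((H.hM t ht).1 c hc)
    (abs_nonneg _) hCE0) (H.hB _).2 (abs_nonneg _) (mul_nonneg hCE0 H.h0M))
    (H.hB _).1 (abs_nonneg _) (mul_nonneg (mul_nonneg hCE0 H.h0M) H.h0B)

lemma bDZ : ∃ C, 0 ≤ C ∧ ∀ t ∈ Set.Icc (0:ℝ) 1, ∀ c ∈ SC, ∀ x ∈ SX,
    |𝐃𝐙 t c x| ≤ C := by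
  haveI := H.pw1; haveI := H.pw2
  obtain ⟨C3, hC30, hC3⟩ := bR3 H
  obtain ⟨C2, hC20, hC2⟩ := bR2 H
  refine ⟨C3 * B + M * (B * (C2 * Kx)), add_nonneg (mul_nonneg hC30 H.h0B) (mul_nonneg H.h0M (mul_nonneg H.h0B (mul_nonneg hC20 H.h0Kx))), fun t ht c hc x hx => ?_⟩
  rw [← Real.norm_eq_abs]
  simp only [DZ]
  refine norm_integral_le_of_bdd ?_
  filter_upwards [ae_prod_mem H.hSW1m H.hSW2m H.hw1s H.hw2s] with z hz
  rw [Real.norm_eq_abs]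
  refine (abs_add_le _ _).trans (add_le_add ?_ ?_)
  · rw [abs_mul]
    exact mul_le_mul (hC3 t ht c hc z.1) (H.hB _).1 (abs_nonneg _) hC30
  · rw [abs_mul, abs_mul]
    refine mul_le_mul ((H.hM t ht).2.2 c hc z.1 hz.1 z.2 hz.2) ?_ (by positivity) H.h0M
    refine mul_le_mul (H.hB _).2 ?_ (abs_nonneg _) H.h0B
    exact (abs_real_inner_le_norm _ _).trans
      (mul_le_mul (hC2 t ht z.1 hz.1) (H.hKx x hx) (norm_nonneg _) hC20)

lemma bDg : ∃ C, 0 ≤ C ∧ ∀ t ∈ Set.Icc (0:ℝ) 1, ∀ x ∈ SX, |𝐃𝐠 t x| ≤ C := by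
  haveI := H.pc
  obtain ⟨C1, hC10, hC1⟩ := bR1 H
  obtain ⟨CZ, hCZ0, hCZ⟩ := bDZ H
  refine ⟨C1 * B + M * (B * CZ), add_nonneg (mul_nonneg hC10 H.h0B) (mul_nonneg H.h0M (mul_nonneg H.h0B hCZ0)), fun t ht x hx => ?_⟩
  rw [← Real.norm_eq_abs]
  simp only [Dg]
  refine norm_integral_le_of_bdd ?_
  filter_upwards [aeC H] with c hc
  rw [Real.norm_eq_abs]
  refine (abs_add_le _ _).trans (add_le_add ?_ ?_)
  · rw [abs_mul]
    exact mul_le_mul (hC1 t ht c) (H.hB _).1 (abs_nonneg _) hC10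
  · rw [abs_mul, abs_mul]
    exact mul_le_mul ((H.hM t ht).1 c hc) (mul_le_mul (H.hB _).2 (hCZ t ht c hc x hx)
      (abs_nonneg _) H.h0B) (by positivity) H.h0M

end Aux
end LLD


namespace LLD
section Aux
variable {d : ℕ} {σ : ℝ → ℝ} {f : Euc d → ℝ}
  {πX : Measure (Euc d)} {μc : Measure ℝ} {μW1 : Measure (Euc d)} {μW2 : Measure ℝ}
  {SX : Set (Euc d)} {SC : Set ℝ} {SW1 : Set (Euc d)} {SW2 : Set ℝ}
  {Ct : ℝ → ℝ → ℝ} {W1t : ℝ → Euc d → Euc d} {W2t : ℝ → ℝ → Euc d → ℝ → ℝ}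
  {M B Mf Kx : ℝ}
  (H : Hyp σ f πX μc μW1 μW2 SX SC SW1 SW2 Ct W1t W2t M B Mf Kx)

local notation "𝐙" => limZ σ μW1 μW2 W1t W2t
local notation "𝐆" => limG σ μc μW1 μW2 Ct W1t W2t
local notation "𝐕" => limV σ μc μW1 μW2 Ct W1t W2t
local notation "𝓡₁" => limR1 σ f πX SX μc μW1 μW2 Ct W1t W2t
local notation "𝓡₂" => limR2 σ f πX SX μc μW1 μW2 Ct W1t W2t
local notation "𝓡₃" => limR3 σ f πX SX μc μW1 μW2 Ct W1t W2t
local notation "𝐈" => Set.Icc (0:ℝ) 1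

include H

lemma hσ'm : Measurable (deriv σ) := (hσ'c H).measurable

-- measurability of sections, convenience
lemma mZc (t : ℝ) (x : Euc d) : Measurable (fun c => 𝐙 t c x) := by
  haveI := H.pw1; haveI := H.pw2
  exact (mZ σ μW1 μW2 W1t W2t (hσc H) H.hW1m H.hW2m t).comp
    (measurable_id.prodMk measurable_const)

lemma mZx (t c : ℝ) : Measurable (fun x => 𝐙 t c x) := by
  haveI := H.pw1; haveI := H.pw2
  exact (mZ σ μW1 μW2 W1t W2t (hσc H) H.hW1m H.hW2m t).comp
    (measurable_const.prodMk measurable_id)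

lemma mGx (t : ℝ) : Measurable (fun x => 𝐆 t x) := by
  haveI := H.pc; haveI := H.pw1; haveI := H.pw2
  exact mG σ μc μW1 μW2 Ct W1t W2t (hσc H) H.hCm H.hW1m H.hW2m t

lemma mZinner (t c : ℝ) (x : Euc d) :
    Measurable (fun w => ∫ u, W2t t c w u * σ ⟪W1t t w, x⟫ ∂μW2) := by
  haveI := H.pw2
  have h0 : Measurable (fun q : Euc d × ℝ => W2t t c q.1 q.2 * σ ⟪W1t t q.1, x⟫) := by
    refine Measurable.mul ?_ ?_
    · exact (H.hW2m t).comp (measurable_const.prodMk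
        (measurable_fst.prodMk measurable_snd))
    · exact (hσc H).measurable.comp (((H.hW1m t).comp measurable_fst).inner measurable_const)
  exact (h0.stronglyMeasurable.integral_prod_right' (ν := μW2)).measurable

lemma mIuc (t : ℝ) (w : Euc d) : Measurable (fun c => ∫ u, W2t t c w u ∂μW2) := by
  haveI := H.pw2
  exact (mIu μW2 W2t H.hW2m t).comp (measurable_id.prodMk measurable_const)

-- continuity in time
lemma cZ {c : ℝ} (hc : c ∈ SC) (x : Euc d) : ContinuousOn (fun t => 𝐙 t c x) 𝐈 := by
  haveI := H.pw1; haveI := H.pw2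
  have inner_cont : ∀ w ∈ SW1, ContinuousOn
      (fun t => ∫ u, W2t t c w u * σ ⟪W1t t w, x⟫ ∂μW2) 𝐈 := by
    intro w hw
    refine continuousOn_of_dominated (bound := fun _ => M * B) ?_ ?_ ?_ ?_
    · intro t _
      exact ((H.hW2m t).comp (measurable_const.prodMk
        (measurable_const.prodMk measurable_id)) |>.mul measurable_const).aestronglyMeasurable
    · intro t ht
      filter_upwards [aeW2 H] with u hu
      rw [Real.norm_eq_abs, abs_mul]
      exact mul_le_mul ((H.hM t ht).2.2 c hc w hw u hu) (H.hB _).1 (abs_nonneg _) H.h0M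
    · exact integrable_const _
    · filter_upwards [aeW2 H] with u hu
      exact (H.hW2cont c hc w hw u hu).mul
        ((hσc H).comp_continuousOn ((H.hW1cont w hw).inner continuousOn_const))
  refine continuousOn_of_dominated (bound := fun _ => M * B) ?_ ?_ ?_ ?_
  · intro t _
    exact (mZinner H t c x).aestronglyMeasurable
  · intro t ht
    filter_upwards [aeW1 H] with w hw
    rw [Real.norm_eq_abs, ← Real.norm_eq_abs]
    refine norm_integral_le_of_bdd ?_
    filter_upwards [aeW2 H] with u hu
    rw [Real.norm_eq_abs, abs_mul]
    exact mul_le_mul ((H.hM t ht).2.2 c hc w hw u hu) (H.hB _).1 (abs_nonneg _) H.h0M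
  · exact integrable_const _
  · filter_upwards [aeW1 H] with w hw
    exact inner_cont w hw

lemma cG (x : Euc d) : ContinuousOn (fun t => 𝐆 t x) 𝐈 := by
  haveI := H.pc
  refine continuousOn_of_dominated (bound := fun _ => M * B) ?_ ?_ ?_ ?_
  · intro t _
    exact ((H.hCm t).mul ((hσc H).measurable.comp (mZc H t x))).aestronglyMeasurable
  · intro t ht
    filter_upwards [aeC H] with c hc
    rw [Real.norm_eq_abs, abs_mul]
    exact mul_le_mul ((H.hM t ht).1 c hc) (H.hB _).1 (abs_nonneg _) H.h0M
  · exact integrable_const _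
  · filter_upwards [aeC H] with c hc
    exact (H.hCcont c hc).mul ((hσc H).comp_continuousOn (cZ H hc x))

lemma cIu {c : ℝ} (hc : c ∈ SC) {w : Euc d} (hw : w ∈ SW1) :
    ContinuousOn (fun t => ∫ u, W2t t c w u ∂μW2) 𝐈 := by
  haveI := H.pw2
  refine continuousOn_of_dominated (bound := fun _ => M) ?_ ?_ ?_ ?_
  · intro t _
    exact ((H.hW2m t).comp (measurable_const.prodMk
      (measurable_const.prodMk measurable_id))).aestronglyMeasurable
  · intro t ht
    filter_upwards [aeW2 H] with u hu
    rw [Real.norm_eq_abs]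
    exact (H.hM t ht).2.2 c hc w hw u hu
  · exact integrable_const _
  · filter_upwards [aeW2 H] with u hu
    exact H.hW2cont c hc w hw u hu

lemma cV {w : Euc d} (hw : w ∈ SW1) (x : Euc d) : ContinuousOn (fun t => 𝐕 t w x) 𝐈 := by
  haveI := H.pc
  obtain ⟨CI, hCI0, hCI⟩ := bIu H
  refine continuousOn_of_dominated (bound := fun _ => M * B * CI) ?_ ?_ ?_ ?_
  · intro t _
    exact (((H.hCm t).mul ((hσ'c H).measurable.comp (mZc H t x))).mul
      (mIuc H t w)).aestronglyMeasurable
  · intro t ht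
    filter_upwards [aeC H] with c hc
    rw [Real.norm_eq_abs, abs_mul, abs_mul]
    exact mul_le_mul (mul_le_mul ((H.hM t ht).1 c hc) (H.hB _).2 (abs_nonneg _) H.h0M)
      (hCI t ht c hc w hw) (abs_nonneg _) (mul_nonneg H.h0M H.h0B)
  · exact integrable_const _
  · filter_upwards [aeC H] with c hc
    exact ((H.hCcont c hc).mul ((hσ'c H).comp_continuousOn (cZ H hc x))).mul (cIu H hc hw)

lemma cR1 {c : ℝ} (hc : c ∈ SC) : ContinuousOn (fun t => 𝓡₁ t c) 𝐈 := by
  haveI := H.pX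
  obtain ⟨CE, hCE0, hCE⟩ := bE H
  have : (fun t => 𝓡₁ t c) = fun t => ∫ x, (f x - 𝐆 t x) * σ (𝐙 t c x) ∂πX := by
    funext t; exact r1eq H t c
  rw [this]
  refine continuousOn_of_dominated (bound := fun _ => CE * B) ?_ ?_ ?_ ?_
  · intro t _
    exact ((H.hfm.sub (mGx H t)).mul
      ((hσc H).measurable.comp (mZx H t c))).aestronglyMeasurable
  · intro t ht
    filter_upwards [aeX H] with x hx
    rw [Real.norm_eq_abs, abs_mul]
    exact mul_le_mul (hCE t ht x hx) (H.hB _).1 (abs_nonneg _) hCE0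
  · exact integrable_const _
  · filter_upwards [aeX H] with x hx
    exact (continuousOn_const.sub (cG H x)).mul ((hσc H).comp_continuousOn (cZ H hc x))

lemma cR2 {w : Euc d} (hw : w ∈ SW1) : ContinuousOn (fun t => 𝓡₂ t w) 𝐈 := by
  haveI := H.pX
  obtain ⟨CE, hCE0, hCE⟩ := bE H
  obtain ⟨CV, hCV0, hCV⟩ := bV H
  have : (fun t => 𝓡₂ t w) =
      fun t => ∫ x, ((f x - 𝐆 t x) * 𝐕 t w x * deriv σ ⟪W1t t w, x⟫) • x ∂πX := by
    funext t; exact r2eq H t w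
  rw [this]
  refine continuousOn_of_dominated (bound := fun _ => CE * CV * B * Kx) ?_ ?_ ?_ ?_
  · intro t _
    haveI := H.pc; haveI := H.pw1; haveI := H.pw2
    refine Measurable.aestronglyMeasurable ?_
    refine Measurable.fun_smul ?_ measurable_id
    exact ((H.hfm.sub (mGx H t)).mul
      ((mV σ μc μW1 μW2 Ct W1t W2t (hσc H) H.hCm H.hW1m H.hW2m (hσ'm H) t).comp
        (measurable_const.prodMk measurable_id))).mul
      ((hσ'm H).comp (measurable_const.inner measurable_id))
  · intro t ht
    filter_upwards [aeX H] with x hx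
    rw [norm_smul, Real.norm_eq_abs, abs_mul, abs_mul]
    refine mul_le_mul (mul_le_mul (mul_le_mul (hCE t ht x hx) (hCV t ht w hw x)
      (abs_nonneg _) hCE0) (H.hB _).2 (abs_nonneg _) (mul_nonneg hCE0 hCV0))
      (H.hKx x hx) (norm_nonneg _) (mul_nonneg (mul_nonneg hCE0 hCV0) H.h0B)
  · exact integrable_const _
  · filter_upwards [aeX H] with x hx
    refine ContinuousOn.fun_smul ?_ continuousOn_const
    exact ((continuousOn_const.sub (cG H x)).mul (cV H hw x)).mul
      ((hσ'c H).comp_continuousOn ((H.hW1cont w hw).inner continuousOn_const))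

lemma cR3 {c : ℝ} (hc : c ∈ SC) {w : Euc d} (hw : w ∈ SW1) :
    ContinuousOn (fun t => 𝓡₃ t c w) 𝐈 := by
  haveI := H.pX
  obtain ⟨CE, hCE0, hCE⟩ := bE H
  have : (fun t => 𝓡₃ t c w) =
      fun t => ∫ x, (f x - 𝐆 t x) * Ct t c * deriv σ (𝐙 t c x) * σ ⟪W1t t w, x⟫ ∂πX := by
    funext t; exact r3eq H t c w
  rw [this]
  refine continuousOn_of_dominated (bound := fun _ => CE * M * B * B) ?_ ?_ ?_ ?_
  · intro t _
    refine Measurable.aestronglyMeasurable ?_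
    exact (((H.hfm.sub (mGx H t)).mul measurable_const).mul
      ((hσ'm H).comp (mZx H t c))).mul
      ((hσc H).measurable.comp (measurable_const.inner measurable_id))
  · intro t ht
    filter_upwards [aeX H] with x hx
    rw [Real.norm_eq_abs, abs_mul, abs_mul, abs_mul]
    refine mul_le_mul (mul_le_mul (mul_le_mul (hCE t ht x hx) ((H.hM t ht).1 c hc)
      (abs_nonneg _) hCE0) (H.hB _).2 (abs_nonneg _) (mul_nonneg hCE0 H.h0M))
      (H.hB _).1 (abs_nonneg _) (mul_nonneg (mul_nonneg hCE0 H.h0M) H.h0B)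
  · exact integrable_const _
  · filter_upwards [aeX H] with x hx
    exact (((continuousOn_const.sub (cG H x)).mul (H.hCcont c hc)).mul
      ((hσ'c H).comp_continuousOn (cZ H hc x))).mul
      ((hσc H).comp_continuousOn ((H.hW1cont w hw).inner continuousOn_const))

end Aux
end LLD


namespace LLD

lemma ftc_aux {E : Type*} [NormedAddCommGroup E] [NormedSpace ℝ E] [CompleteSpace E] {ρ : ℝ → E}
    (hρ : ContinuousOn ρ (Set.Icc 0 1)) {t₀ : ℝ} (ht₀ : t₀ ∈ Set.Ioo (0:ℝ) 1) :
    HasDerivAt (fun t => ∫ s in Set.Icc (0:ℝ) t, ρ s) (ρ t₀) t₀ := by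
  have hmono : Set.Ioo (0:ℝ) 1 ⊆ Set.Icc 0 1 := Set.Ioo_subset_Icc_self
  have h1 : HasDerivAt (fun t => ∫ s in (0:ℝ)..t, ρ s) (ρ t₀) t₀ := by
    apply intervalIntegral.integral_hasDerivAt_right
    · apply ContinuousOn.intervalIntegrable
      apply hρ.mono
      rw [Set.uIcc_of_le ht₀.1.le]
      exact Set.Icc_subset_Icc le_rfl ht₀.2.le
    · exact (hρ.mono hmono).stronglyMeasurableAtFilter isOpen_Ioo t₀ ht₀
    · exact (hρ.mono hmono).continuousAt (isOpen_Ioo.mem_nhds ht₀)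
  refine h1.congr_of_eventuallyEq ?_
  filter_upwards [isOpen_Ioo.mem_nhds ht₀] with t ht
  rw [intervalIntegral.integral_of_le ht.1.le, integral_Icc_eq_integral_Ioc]

section Aux
variable {d : ℕ} {σ : ℝ → ℝ} {f : Euc d → ℝ}
  {πX : Measure (Euc d)} {μc : Measure ℝ} {μW1 : Measure (Euc d)} {μW2 : Measure ℝ}
  {SX : Set (Euc d)} {SC : Set ℝ} {SW1 : Set (Euc d)} {SW2 : Set ℝ}
  {Ct : ℝ → ℝ → ℝ} {W1t : ℝ → Euc d → Euc d} {W2t : ℝ → ℝ → Euc d → ℝ → ℝ}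
  {M B Mf Kx : ℝ}
  (H : Hyp σ f πX μc μW1 μW2 SX SC SW1 SW2 Ct W1t W2t M B Mf Kx)

local notation "𝐙" => limZ σ μW1 μW2 W1t W2t
local notation "𝐆" => limG σ μc μW1 μW2 Ct W1t W2t
local notation "𝐕" => limV σ μc μW1 μW2 Ct W1t W2t
local notation "𝓡₁" => limR1 σ f πX SX μc μW1 μW2 Ct W1t W2t
local notation "𝓡₂" => limR2 σ f πX SX μc μW1 μW2 Ct W1t W2t
local notation "𝓡₃" => limR3 σ f πX SX μc μW1 μW2 Ct W1t W2t
local notation "𝐃𝐙" => DZ σ f πX SX μc μW1 μW2 Ct W1t W2t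
local notation "𝐃𝐠" => Dg σ f πX SX μc μW1 μW2 Ct W1t W2t
local notation "𝐈" => Set.Icc (0:ℝ) 1

include H

lemma dC {t₀ : ℝ} (ht₀ : t₀ ∈ Set.Ioo (0:ℝ) 1) {c : ℝ} (hc : c ∈ SC) :
    HasDerivAt (fun t => Ct t c) (𝓡₁ t₀ c) t₀ := by
  refine ((ftc_aux (cR1 H hc) ht₀).const_add c).congr_of_eventuallyEq ?_
  filter_upwards [isOpen_Ioo.mem_nhds ht₀] with t ht
  exact H.heqC t (Set.Ioo_subset_Icc_self ht) c hc

lemma dW1 {t₀ : ℝ} (ht₀ : t₀ ∈ Set.Ioo (0:ℝ) 1) {w : Euc d} (hw : w ∈ SW1) :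
    HasDerivAt (fun t => W1t t w) (𝓡₂ t₀ w) t₀ := by
  refine ((ftc_aux (cR2 H hw) ht₀).const_add w).congr_of_eventuallyEq ?_
  filter_upwards [isOpen_Ioo.mem_nhds ht₀] with t ht
  exact H.heqW1 t (Set.Ioo_subset_Icc_self ht) w hw

lemma dW2 {t₀ : ℝ} (ht₀ : t₀ ∈ Set.Ioo (0:ℝ) 1) {c : ℝ} (hc : c ∈ SC)
    {w : Euc d} (hw : w ∈ SW1) {u : ℝ} (hu : u ∈ SW2) :
    HasDerivAt (fun t => W2t t c w u) (𝓡₃ t₀ c w) t₀ := by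
  refine ((ftc_aux (cR3 H hc hw) ht₀).const_add u).congr_of_eventuallyEq ?_
  filter_upwards [isOpen_Ioo.mem_nhds ht₀] with t ht
  exact H.heqW2 t (Set.Ioo_subset_Icc_self ht) c hc w hw u hu

lemma Zprod {t : ℝ} (ht : t ∈ 𝐈) {c : ℝ} (hc : c ∈ SC) (x : Euc d) :
    𝐙 t c x = ∫ z, W2t t c z.1 z.2 * σ ⟪W1t t z.1, x⟫ ∂(μW1.prod μW2) := by
  haveI := H.pw1; haveI := H.pw2
  simp only [limZ]
  refine integral_integral (μ := μW1) (ν := μW2) (f := fun w u => W2t t c w u * σ ⟪W1t t w, x⟫) ?_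
  refine integrable_of_bdd (C := M * B) ?_ ?_
  · refine Measurable.aestronglyMeasurable ?_
    refine Measurable.mul ?_ ?_
    · exact (H.hW2m t).comp (measurable_const.prodMk
        (measurable_fst.prodMk measurable_snd))
    · exact (hσc H).measurable.comp (((H.hW1m t).comp measurable_fst).inner measurable_const)
  · filter_upwards [ae_prod_mem H.hSW1m H.hSW2m H.hw1s H.hw2s] with z hz
    rw [Function.uncurry_def, Real.norm_eq_abs, abs_mul]
    exact mul_le_mul ((H.hM t ht).2.2 c hc z.1 hz.1 z.2 hz.2) (H.hB _).1
      (abs_nonneg _) H.h0M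

lemma dZ {t₀ : ℝ} (ht₀ : t₀ ∈ Set.Ioo (0:ℝ) 1) {c : ℝ} (hc : c ∈ SC)
    {x : Euc d} (hx : x ∈ SX) :
    HasDerivAt (fun t => 𝐙 t c x) (𝐃𝐙 t₀ c x) t₀ := by
  haveI := H.pX; haveI := H.pc; haveI := H.pw1; haveI := H.pw2
  obtain ⟨ε, εpos, hball⟩ := Metric.isOpen_iff.mp isOpen_Ioo t₀ ht₀
  obtain ⟨C3, hC30, hC3⟩ := bR3 H
  obtain ⟨C2, hC20, hC2⟩ := bR2 H
  have hIoo : Set.Ioo (0:ℝ) 1 ⊆ 𝐈 := Set.Ioo_subset_Icc_self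
  have key := hasDerivAt_integral_of_dominated_loc_of_deriv_le (μ := μW1.prod μW2)
    (F := fun t z => W2t t c z.1 z.2 * σ ⟪W1t t z.1, x⟫)
    (F' := fun t z => 𝓡₃ t c z.1 * σ ⟪W1t t z.1, x⟫ +
      W2t t c z.1 z.2 * (deriv σ ⟪W1t t z.1, x⟫ * ⟪𝓡₂ t z.1, x⟫))
    (bound := fun _ => C3 * B + M * (B * (C2 * Kx))) (x₀ := t₀) (Metric.ball_mem_nhds t₀ εpos) ?_ ?_ ?_ ?_ ?_ ?_
  · refine key.2.congr_of_eventuallyEq ?_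
    filter_upwards [isOpen_Ioo.mem_nhds ht₀] with t ht
    exact Zprod H (hIoo ht) hc x
  · refine Filter.Eventually.of_forall (fun t => ?_)
    refine Measurable.aestronglyMeasurable ?_
    refine Measurable.mul ?_ ?_
    · exact (H.hW2m t).comp (measurable_const.prodMk
        (measurable_fst.prodMk measurable_snd))
    · exact (hσc H).measurable.comp (((H.hW1m t).comp measurable_fst).inner measurable_const)
  · refine integrable_of_bdd (C := M * B) ?_ ?_
    · refine Measurable.aestronglyMeasurable ?_
      refine Measurable.mul ?_ ?_
      · exact (H.hW2m t₀).comp (measurable_const.prodMk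
          (measurable_fst.prodMk measurable_snd))
      · exact (hσc H).measurable.comp (((H.hW1m t₀).comp measurable_fst).inner measurable_const)
    · filter_upwards [ae_prod_mem H.hSW1m H.hSW2m H.hw1s H.hw2s] with z hz
      rw [Real.norm_eq_abs, abs_mul]
      exact mul_le_mul ((H.hM t₀ (hIoo ht₀)).2.2 c hc z.1 hz.1 z.2 hz.2) (H.hB _).1
        (abs_nonneg _) H.h0M
  · refine Measurable.aestronglyMeasurable ?_
    refine Measurable.add (Measurable.mul ?_ ?_) (Measurable.mul ?_ (Measurable.mul ?_ ?_))
    · exact (mR3 σ f πX μc μW1 μW2 SX Ct W1t W2t (hσc H) H.hfm H.hCm H.hW1m H.hW2m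
        (hσ'm H) t₀).comp (measurable_const.prodMk measurable_fst)
    · exact (hσc H).measurable.comp (((H.hW1m t₀).comp measurable_fst).inner measurable_const)
    · exact (H.hW2m t₀).comp (measurable_const.prodMk
        (measurable_fst.prodMk measurable_snd))
    · exact (hσ'm H).comp (((H.hW1m t₀).comp measurable_fst).inner measurable_const)
    · exact ((mR2 σ f πX μc μW1 μW2 SX Ct W1t W2t (hσc H) H.hfm H.hCm H.hW1m H.hW2m
        (hσ'm H) t₀).comp measurable_fst).inner measurable_const
  · filter_upwards [ae_prod_mem H.hSW1m H.hSW2m H.hw1s H.hw2s] with z hz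
    intro t htb
    have ht : t ∈ 𝐈 := hIoo (hball htb)
    rw [Real.norm_eq_abs]
    refine (abs_add_le _ _).trans (add_le_add ?_ ?_)
    · rw [abs_mul]
      exact mul_le_mul (hC3 t ht c hc z.1) (H.hB _).1 (abs_nonneg _) hC30
    · rw [abs_mul, abs_mul]
      refine mul_le_mul ((H.hM t ht).2.2 c hc z.1 hz.1 z.2 hz.2) ?_ (by positivity) H.h0M
      refine mul_le_mul (H.hB _).2 ?_ (abs_nonneg _) H.h0B
      exact (abs_real_inner_le_norm _ _).trans
        (mul_le_mul (hC2 t ht z.1 hz.1) (H.hKx x hx) (norm_nonneg _) hC20)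
  · exact integrable_const _
  · filter_upwards [ae_prod_mem H.hSW1m H.hSW2m H.hw1s H.hw2s] with z hz
    intro t htb
    have htI : t ∈ Set.Ioo (0:ℝ) 1 := hball htb
    have hW2d := dW2 H htI hc hz.1 hz.2
    have hinner : HasDerivAt (fun t => ⟪W1t t z.1, x⟫) ⟪𝓡₂ t z.1, x⟫ t := by
      simpa using (dW1 H htI hz.1).inner (𝕜 := ℝ) (hasDerivAt_const t x)
    have hσcomp : HasDerivAt (fun t => σ ⟪W1t t z.1, x⟫)
        (deriv σ ⟪W1t t z.1, x⟫ * ⟪𝓡₂ t z.1, x⟫) t :=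
      (hσd H _).comp t hinner
    exact hW2d.mul hσcomp

end Aux
end LLD


namespace LLD
section Aux
variable {d : ℕ} {σ : ℝ → ℝ} {f : Euc d → ℝ}
  {πX : Measure (Euc d)} {μc : Measure ℝ} {μW1 : Measure (Euc d)} {μW2 : Measure ℝ}
  {SX : Set (Euc d)} {SC : Set ℝ} {SW1 : Set (Euc d)} {SW2 : Set ℝ}
  {Ct : ℝ → ℝ → ℝ} {W1t : ℝ → Euc d → Euc d} {W2t : ℝ → ℝ → Euc d → ℝ → ℝ}
  {M B Mf Kx : ℝ}
  (H : Hyp σ f πX μc μW1 μW2 SX SC SW1 SW2 Ct W1t W2t M B Mf Kx)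

local notation "𝐙" => limZ σ μW1 μW2 W1t W2t
local notation "𝐆" => limG σ μc μW1 μW2 Ct W1t W2t
local notation "𝐕" => limV σ μc μW1 μW2 Ct W1t W2t
local notation "𝓡₁" => limR1 σ f πX SX μc μW1 μW2 Ct W1t W2t
local notation "𝓡₂" => limR2 σ f πX SX μc μW1 μW2 Ct W1t W2t
local notation "𝓡₃" => limR3 σ f πX SX μc μW1 μW2 Ct W1t W2t
local notation "𝐃𝐙" => DZ σ f πX SX μc μW1 μW2 Ct W1t W2t
local notation "𝐃𝐠" => Dg σ f πX SX μc μW1 μW2 Ct W1t W2t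
local notation "𝚽" => Phi σ f πX SX μc μW1 μW2 Ct W1t W2t
local notation "𝐈" => Set.Icc (0:ℝ) 1

include H

lemma mDZc (t : ℝ) (x : Euc d) : Measurable (fun c => 𝐃𝐙 t c x) := by
  haveI := H.pX; haveI := H.pc; haveI := H.pw1; haveI := H.pw2
  exact (mDZ σ f πX μc μW1 μW2 SX Ct W1t W2t (hσc H) H.hfm H.hCm H.hW1m H.hW2m
    (hσ'm H) t).comp (measurable_id.prodMk measurable_const)

lemma mDgx (t : ℝ) : Measurable (fun x => 𝐃𝐠 t x) := by
  haveI := H.pX; haveI := H.pc; haveI := H.pw1; haveI := H.pw2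
  exact mDg σ f πX μc μW1 μW2 SX Ct W1t W2t (hσc H) H.hfm H.hCm H.hW1m H.hW2m (hσ'm H) t

lemma dG {t₀ : ℝ} (ht₀ : t₀ ∈ Set.Ioo (0:ℝ) 1) {x : Euc d} (hx : x ∈ SX) :
    HasDerivAt (fun t => 𝐆 t x) (𝐃𝐠 t₀ x) t₀ := by
  haveI := H.pX; haveI := H.pc; haveI := H.pw1; haveI := H.pw2
  obtain ⟨ε, εpos, hball⟩ := Metric.isOpen_iff.mp isOpen_Ioo t₀ ht₀
  obtain ⟨C1, hC10, hC1⟩ := bR1 H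
  obtain ⟨CZ, hCZ0, hCZ⟩ := bDZ H
  have hIoo : Set.Ioo (0:ℝ) 1 ⊆ 𝐈 := Set.Ioo_subset_Icc_self
  have key := hasDerivAt_integral_of_dominated_loc_of_deriv_le (μ := μc)
    (F := fun t c => Ct t c * σ (𝐙 t c x))
    (F' := fun t c => 𝓡₁ t c * σ (𝐙 t c x) + Ct t c * (deriv σ (𝐙 t c x) * 𝐃𝐙 t c x))
    (bound := fun _ => C1 * B + M * (B * CZ)) (x₀ := t₀) (Metric.ball_mem_nhds t₀ εpos) ?_ ?_ ?_ ?_ ?_ ?_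
  · simpa [limG, Dg] using key.2
  · refine Filter.Eventually.of_forall (fun t => ?_)
    exact ((H.hCm t).mul ((hσc H).measurable.comp (mZc H t x))).aestronglyMeasurable
  · refine integrable_of_bdd (C := M * B) ?_ ?_
    · exact ((H.hCm t₀).mul ((hσc H).measurable.comp (mZc H t₀ x))).aestronglyMeasurable
    · filter_upwards [aeC H] with c hc
      rw [Real.norm_eq_abs, abs_mul]
      exact mul_le_mul ((H.hM t₀ (hIoo ht₀)).1 c hc) (H.hB _).1 (abs_nonneg _) H.h0M
  · refine Measurable.aestronglyMeasurable ?_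
    refine Measurable.add (Measurable.mul ?_ ?_) (Measurable.mul ?_ (Measurable.mul ?_ ?_))
    · exact mR1 σ f πX μc μW1 μW2 SX Ct W1t W2t (hσc H) H.hfm H.hCm H.hW1m H.hW2m t₀
    · exact (hσc H).measurable.comp (mZc H t₀ x)
    · exact H.hCm t₀
    · exact (hσ'm H).comp (mZc H t₀ x)
    · exact mDZc H t₀ x
  · filter_upwards [aeC H] with c hc
    intro t htb
    have ht : t ∈ 𝐈 := hIoo (hball htb)
    rw [Real.norm_eq_abs]
    refine (abs_add_le _ _).trans (add_le_add ?_ ?_)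
    · rw [abs_mul]
      exact mul_le_mul (hC1 t ht c) (H.hB _).1 (abs_nonneg _) hC10
    · rw [abs_mul, abs_mul]
      exact mul_le_mul ((H.hM t ht).1 c hc) (mul_le_mul (H.hB _).2 (hCZ t ht c hc x hx)
        (abs_nonneg _) H.h0B) (by positivity) H.h0M
  · exact integrable_const _
  · filter_upwards [aeC H] with c hc
    intro t htb
    have htI : t ∈ Set.Ioo (0:ℝ) 1 := hball htb
    exact (dC H htI hc).mul ((hσd H _).comp t (dZ H htI hc hx))

lemma dLossAux {t₀ : ℝ} (ht₀ : t₀ ∈ Set.Ioo (0:ℝ) 1) :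
    HasDerivAt (fun t => ∫ x, (f x - 𝐆 t x)^2 ∂πX)
      (∫ x, (-2 : ℝ) * ((f x - 𝐆 t₀ x) * 𝐃𝐠 t₀ x) ∂πX) t₀ := by
  haveI := H.pX; haveI := H.pc; haveI := H.pw1; haveI := H.pw2
  obtain ⟨ε, εpos, hball⟩ := Metric.isOpen_iff.mp isOpen_Ioo t₀ ht₀
  obtain ⟨CE, hCE0, hCE⟩ := bE H
  obtain ⟨CG, hCG0, hCG⟩ := bDg H
  have hIoo : Set.Ioo (0:ℝ) 1 ⊆ 𝐈 := Set.Ioo_subset_Icc_self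
  have key := hasDerivAt_integral_of_dominated_loc_of_deriv_le (μ := πX)
    (F := fun t x => (f x - 𝐆 t x)^2)
    (F' := fun t x => (-2 : ℝ) * ((f x - 𝐆 t x) * 𝐃𝐠 t x))
    (bound := fun _ => 2 * (CE * CG)) (x₀ := t₀) (Metric.ball_mem_nhds t₀ εpos) ?_ ?_ ?_ ?_ ?_ ?_
  · exact key.2
  · refine Filter.Eventually.of_forall (fun t => ?_)
    exact ((H.hfm.sub (mGx H t)).pow_const 2).aestronglyMeasurable
  · refine integrable_of_bdd (C := CE^2) ?_ ?_
    · exact ((H.hfm.sub (mGx H t₀)).pow_const 2).aestronglyMeasurable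
    · filter_upwards [aeX H] with x hx
      rw [Real.norm_eq_abs, abs_pow]
      exact pow_le_pow_left₀ (abs_nonneg _) (hCE t₀ (hIoo ht₀) x hx) 2
  · exact (measurable_const.mul ((H.hfm.sub (mGx H t₀)).mul
      (mDgx H t₀))).aestronglyMeasurable
  · filter_upwards [aeX H] with x hx
    intro t htb
    have ht : t ∈ 𝐈 := hIoo (hball htb)
    rw [Real.norm_eq_abs, abs_mul, abs_mul]
    have h2 : |(-2 : ℝ)| = 2 := by norm_num
    rw [h2]
    exact mul_le_mul le_rfl (mul_le_mul (hCE t ht x hx) (hCG t ht x hx)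
      (abs_nonneg _) hCE0) (by positivity) (by norm_num)
  · exact integrable_const _
  · filter_upwards [aeX H] with x hx
    intro t htb
    have htI : t ∈ Set.Ioo (0:ℝ) 1 := hball htb
    have h := ((dG H htI hx).const_sub (f x)).pow 2
    refine h.congr_deriv ?_
    push_cast
    ring

lemma cLoss : ContinuousOn (fun t => ∫ x, (f x - 𝐆 t x)^2 ∂πX) 𝐈 := by
  haveI := H.pX
  obtain ⟨CE, hCE0, hCE⟩ := bE H
  refine continuousOn_of_dominated (bound := fun _ => CE^2) ?_ ?_ ?_ ?_
  · intro t _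
    exact ((H.hfm.sub (mGx H t)).pow_const 2).aestronglyMeasurable
  · intro t ht
    filter_upwards [aeX H] with x hx
    rw [Real.norm_eq_abs, abs_pow]
    exact pow_le_pow_left₀ (abs_nonneg _) (hCE t ht x hx) 2
  · exact integrable_const _
  · filter_upwards [aeX H] with x hx
    exact (continuousOn_const.sub (cG H x)).pow 2

lemma mR3sq (t : ℝ) : Measurable (fun c => ∫ w, (𝓡₃ t c w)^2 ∂μW1) := by
  haveI := H.pX; haveI := H.pc; haveI := H.pw1; haveI := H.pw2
  have h0 : Measurable (fun p : ℝ × Euc d => (𝓡₃ t p.1 p.2)^2) :=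
    (mR3 σ f πX μc μW1 μW2 SX Ct W1t W2t (hσc H) H.hfm H.hCm H.hW1m H.hW2m
      (hσ'm H) t).pow_const 2
  exact (h0.stronglyMeasurable.integral_prod_right' (ν := μW1)).measurable

lemma cPhi : ContinuousOn (fun t => 𝚽 t) 𝐈 := by
  haveI := H.pX; haveI := H.pc; haveI := H.pw1; haveI := H.pw2
  obtain ⟨C1, hC10, hC1⟩ := bR1 H
  obtain ⟨C2, hC20, hC2⟩ := bR2 H
  obtain ⟨C3, hC30, hC3⟩ := bR3 H
  simp only [Phi]
  refine ContinuousOn.add (ContinuousOn.add ?_ ?_) ?_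
  · refine continuousOn_of_dominated (bound := fun _ => C1^2) ?_ ?_ ?_ ?_
    · intro t _
      exact ((mR1 σ f πX μc μW1 μW2 SX Ct W1t W2t (hσc H) H.hfm H.hCm H.hW1m H.hW2m
        t).pow_const 2).aestronglyMeasurable
    · intro t ht
      filter_upwards [aeC H] with c hc
      rw [Real.norm_eq_abs, abs_pow]
      exact pow_le_pow_left₀ (abs_nonneg _) (hC1 t ht c) 2
    · exact integrable_const _
    · filter_upwards [aeC H] with c hc
      exact (cR1 H hc).pow 2
  · refine continuousOn_of_dominated (bound := fun _ => C2^2) ?_ ?_ ?_ ?_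
    · intro t _
      exact (((mR2 σ f πX μc μW1 μW2 SX Ct W1t W2t (hσc H) H.hfm H.hCm H.hW1m H.hW2m
        (hσ'm H) t).norm).pow_const 2).aestronglyMeasurable
    · intro t ht
      filter_upwards [aeW1 H] with w hw
      rw [Real.norm_eq_abs, abs_pow, abs_norm]
      exact pow_le_pow_left₀ (norm_nonneg _) (hC2 t ht w hw) 2
    · exact integrable_const _
    · filter_upwards [aeW1 H] with w hw
      exact ((cR2 H hw).norm).pow 2
  · refine continuousOn_of_dominated (bound := fun _ => C3^2) ?_ ?_ ?_ ?_
    · intro t _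
      exact (mR3sq H t).aestronglyMeasurable
    · intro t ht
      filter_upwards [aeC H] with c hc
      rw [Real.norm_eq_abs, ← Real.norm_eq_abs]
      refine norm_integral_le_of_bdd ?_
      filter_upwards [aeW1 H] with w hw
      rw [Real.norm_eq_abs, abs_pow]
      exact pow_le_pow_left₀ (abs_nonneg _) (hC3 t ht c hc w) 2
    · exact integrable_const _
    · filter_upwards [aeC H] with c hc
      refine continuousOn_of_dominated (bound := fun _ => C3^2) ?_ ?_ ?_ ?_
      · intro t _
        refine Measurable.aestronglyMeasurable ?_
        exact ((mR3 σ f πX μc μW1 μW2 SX Ct W1t W2t (hσc H) H.hfm H.hCm H.hW1m H.hW2m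
          (hσ'm H) t).comp (measurable_const.prodMk measurable_id)).pow_const 2
      · intro t ht
        filter_upwards [aeW1 H] with w hw
        rw [Real.norm_eq_abs, abs_pow]
        exact pow_le_pow_left₀ (abs_nonneg _) (hC3 t ht c hc w) 2
      · exact integrable_const _
      · filter_upwards [aeW1 H] with w hw
        exact (cR3 H hc hw).pow 2

lemma Phi0 (t : ℝ) : 0 ≤ 𝚽 t := by
  haveI := H.pc; haveI := H.pw1
  refine add_nonneg (add_nonneg ?_ ?_) ?_
  · exact integral_nonneg (fun c => sq_nonneg _)
  · exact integral_nonneg (fun w => sq_nonneg _)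
  · exact integral_nonneg (fun c => integral_nonneg (fun w => sq_nonneg _))

end Aux
end LLD


namespace LLD

lemma integral_fst_prod {α β : Type*} [MeasurableSpace α] [MeasurableSpace β]
    {μ : Measure α} {ν : Measure β} [SFinite μ] [IsProbabilityMeasure ν]
    {g : α → ℝ} (hg : AEStronglyMeasurable g μ) :
    ∫ z : α × β, g z.1 ∂(μ.prod ν) = ∫ a, g a ∂μ := by
  have hm : (μ.prod ν).map Prod.fst = μ := Measure.fst_prod
  have hg' : AEStronglyMeasurable g ((μ.prod ν).map Prod.fst) := by rw [hm]; exact hg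
  rw [← integral_map measurable_fst.aemeasurable hg', hm]

/-- auxiliary integral `J` -/
noncomputable def Jf {d : ℕ} (σ : ℝ → ℝ) (f : Euc d → ℝ)
    (πX : Measure (Euc d)) (SX : Set (Euc d))
    (μc : Measure ℝ) (μW1 : Measure (Euc d)) (μW2 : Measure ℝ)
    (Ct : ℝ → ℝ → ℝ) (W1t : ℝ → Euc d → Euc d) (W2t : ℝ → ℝ → Euc d → ℝ → ℝ)
    (t c : ℝ) (w : Euc d) : ℝ :=
  ∫ x, (f x - limG σ μc μW1 μW2 Ct W1t W2t t x) *
      (Ct t c * deriv σ (limZ σ μW1 μW2 W1t W2t t c x)) *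
      deriv σ ⟪W1t t w, x⟫ * ⟪limR2 σ f πX SX μc μW1 μW2 Ct W1t W2t t w, x⟫ ∂πX

section Aux
variable {d : ℕ} {σ : ℝ → ℝ} {f : Euc d → ℝ}
  {πX : Measure (Euc d)} {μc : Measure ℝ} {μW1 : Measure (Euc d)} {μW2 : Measure ℝ}
  {SX : Set (Euc d)} {SC : Set ℝ} {SW1 : Set (Euc d)} {SW2 : Set ℝ}
  {Ct : ℝ → ℝ → ℝ} {W1t : ℝ → Euc d → Euc d} {W2t : ℝ → ℝ → Euc d → ℝ → ℝ}
  {M B Mf Kx : ℝ}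
  (H : Hyp σ f πX μc μW1 μW2 SX SC SW1 SW2 Ct W1t W2t M B Mf Kx)

local notation "𝐙" => limZ σ μW1 μW2 W1t W2t
local notation "𝐆" => limG σ μc μW1 μW2 Ct W1t W2t
local notation "𝐕" => limV σ μc μW1 μW2 Ct W1t W2t
local notation "𝓡₁" => limR1 σ f πX SX μc μW1 μW2 Ct W1t W2t
local notation "𝓡₂" => limR2 σ f πX SX μc μW1 μW2 Ct W1t W2t
local notation "𝓡₃" => limR3 σ f πX SX μc μW1 μW2 Ct W1t W2t
local notation "𝐃𝐙" => DZ σ f πX SX μc μW1 μW2 Ct W1t W2t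
local notation "𝐃𝐠" => Dg σ f πX SX μc μW1 μW2 Ct W1t W2t
local notation "𝐉" => Jf σ f πX SX μc μW1 μW2 Ct W1t W2t
local notation "𝚽" => Phi σ f πX SX μc μW1 μW2 Ct W1t W2t
local notation "𝐈" => Set.Icc (0:ℝ) 1

include H

lemma mE (t : ℝ) : Measurable (fun x => f x - 𝐆 t x) := H.hfm.sub (mGx H t)

lemma mDZx (t c : ℝ) : Measurable (fun x => 𝐃𝐙 t c x) := by
  haveI := H.pX; haveI := H.pc; haveI := H.pw1; haveI := H.pw2
  exact (mDZ σ f πX μc μW1 μW2 SX Ct W1t W2t (hσc H) H.hfm H.hCm H.hW1m H.hW2m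
    (hσ'm H) t).comp (measurable_const.prodMk measurable_id)

lemma mJint (t : ℝ) : Measurable (fun q : (ℝ × Euc d) × Euc d =>
    (f q.2 - 𝐆 t q.2) * (Ct t q.1.1 * deriv σ (𝐙 t q.1.1 q.2)) *
      deriv σ ⟪W1t t q.1.2, q.2⟫ * ⟪𝓡₂ t q.1.2, q.2⟫) := by
  haveI := H.pX; haveI := H.pc; haveI := H.pw1; haveI := H.pw2
  refine (((((mE H t).comp measurable_snd).mul ?_).mul ?_).mul ?_)
  · exact ((H.hCm t).comp (measurable_fst.comp measurable_fst)).mul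
      ((hσ'm H).comp ((mZ σ μW1 μW2 W1t W2t (hσc H) H.hW1m H.hW2m t).comp
        ((measurable_fst.comp measurable_fst).prodMk measurable_snd)))
  · exact (hσ'm H).comp (((H.hW1m t).comp (measurable_snd.comp measurable_fst)).inner
      measurable_snd)
  · exact ((mR2 σ f πX μc μW1 μW2 SX Ct W1t W2t (hσc H) H.hfm H.hCm H.hW1m H.hW2m
      (hσ'm H) t).comp (measurable_snd.comp measurable_fst)).inner measurable_snd

lemma mJ (t : ℝ) : Measurable (fun p : ℝ × Euc d => 𝐉 t p.1 p.2) := by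
  haveI := H.pX
  have h1 := ((mJint H t).stronglyMeasurable.integral_prod_right' (ν := πX))
  simpa [Jf] using h1.measurable

lemma bJ : ∃ C, 0 ≤ C ∧ ∀ t ∈ 𝐈, ∀ c ∈ SC, ∀ w ∈ SW1, |𝐉 t c w| ≤ C := by
  haveI := H.pX
  obtain ⟨CE, hCE0, hCE⟩ := bE H
  obtain ⟨C2, hC20, hC2⟩ := bR2 H
  refine ⟨CE * (M * B) * B * (C2 * Kx), mul_nonneg (mul_nonneg (mul_nonneg hCE0 (mul_nonneg H.h0M H.h0B)) H.h0B) (mul_nonneg hC20 H.h0Kx), fun t ht c hc w hw => ?_⟩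
  rw [← Real.norm_eq_abs]
  simp only [Jf]
  refine norm_integral_le_of_bdd ?_
  filter_upwards [aeX H] with x hx
  rw [Real.norm_eq_abs, abs_mul, abs_mul, abs_mul]
  refine mul_le_mul (mul_le_mul (mul_le_mul (hCE t ht x hx) ?_ (abs_nonneg _) hCE0)
    (H.hB _).2 (abs_nonneg _) ?_) ?_ (abs_nonneg _) ?_
  · rw [abs_mul]
    exact mul_le_mul ((H.hM t ht).1 c hc) (H.hB _).2 (abs_nonneg _) H.h0M
  · exact mul_nonneg hCE0 (mul_nonneg H.h0M H.h0B)
  · exact (abs_real_inner_le_norm _ _).trans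
      (mul_le_mul (hC2 t ht w hw) (H.hKx x hx) (norm_nonneg _) hC20)
  · exact mul_nonneg (mul_nonneg hCE0 (mul_nonneg H.h0M H.h0B)) H.h0B

lemma keyId {t : ℝ} (ht : t ∈ 𝐈) :
    ∫ x, (f x - 𝐆 t x) * 𝐃𝐠 t x ∂πX = 𝚽 t := by
  haveI := H.pX; haveI := H.pc; haveI := H.pw1; haveI := H.pw2
  obtain ⟨CE, hCE0, hCE⟩ := bE H
  obtain ⟨C1, hC10, hC1⟩ := bR1 H
  obtain ⟨C2, hC20, hC2⟩ := bR2 H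
  obtain ⟨C3, hC30, hC3⟩ := bR3 H
  obtain ⟨CZ, hCZ0, hCZ⟩ := bDZ H
  obtain ⟨CI, hCI0, hCI⟩ := bIu H
  obtain ⟨CJ, hCJ0, hCJ⟩ := bJ H
  -- step 1: expand Dg and pull E inside
  have h1 : (∫ x, (f x - 𝐆 t x) * 𝐃𝐠 t x ∂πX) =
      ∫ x, ∫ c, (f x - 𝐆 t x) * (𝓡₁ t c * σ (𝐙 t c x) +
        Ct t c * (deriv σ (𝐙 t c x) * 𝐃𝐙 t c x)) ∂μc ∂πX := by
    refine integral_congr_ae (Filter.Eventually.of_forall fun x => ?_)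
    simp only [Dg]
    exact (integral_const_mul _ _).symm
  -- step 2: swap x and c
  have hint2 : Integrable (Function.uncurry fun x c => (f x - 𝐆 t x) *
      (𝓡₁ t c * σ (𝐙 t c x) + Ct t c * (deriv σ (𝐙 t c x) * 𝐃𝐙 t c x)))
      (πX.prod μc) := by
    refine integrable_of_bdd (C := CE * (C1 * B + M * (B * CZ))) ?_ ?_
    · refine Measurable.aestronglyMeasurable ?_
      refine ((mE H t).comp measurable_fst).mul ?_
      refine Measurable.add (Measurable.mul ?_ ?_) (Measurable.mul ?_ (Measurable.mul ?_ ?_))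
      · exact (mR1 σ f πX μc μW1 μW2 SX Ct W1t W2t (hσc H) H.hfm H.hCm H.hW1m H.hW2m
          t).comp measurable_snd
      · exact (hσc H).measurable.comp ((mZ σ μW1 μW2 W1t W2t (hσc H) H.hW1m H.hW2m t).comp
          (measurable_snd.prodMk measurable_fst))
      · exact (H.hCm t).comp measurable_snd
      · exact (hσ'm H).comp ((mZ σ μW1 μW2 W1t W2t (hσc H) H.hW1m H.hW2m t).comp
          (measurable_snd.prodMk measurable_fst))
      · exact (mDZ σ f πX μc μW1 μW2 SX Ct W1t W2t (hσc H) H.hfm H.hCm H.hW1m H.hW2m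
          (hσ'm H) t).comp (measurable_snd.prodMk measurable_fst)
    · filter_upwards [ae_prod_mem H.hSXm H.hSCm H.hXs H.hcs] with z hz
      rw [Function.uncurry_def, Real.norm_eq_abs, abs_mul]
      refine mul_le_mul (hCE t ht z.1 hz.1) ((abs_add_le _ _).trans (add_le_add ?_ ?_))
        (abs_nonneg _) hCE0
      · rw [abs_mul]
        exact mul_le_mul (hC1 t ht z.2) (H.hB _).1 (abs_nonneg _) hC10
      · rw [abs_mul, abs_mul]
        exact mul_le_mul ((H.hM t ht).1 z.2 hz.2) (mul_le_mul (H.hB _).2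
          (hCZ t ht z.2 hz.2 z.1 hz.1) (abs_nonneg _) H.h0B) (by positivity) H.h0M
  have h2 := integral_integral_swap hint2
  -- step 3: per c ∈ SC massage the inner integral
  have h3 : ∀ c ∈ SC, (∫ x, (f x - 𝐆 t x) * (𝓡₁ t c * σ (𝐙 t c x) +
      Ct t c * (deriv σ (𝐙 t c x) * 𝐃𝐙 t c x)) ∂πX) =
      (𝓡₁ t c)^2 + ∫ z, ((𝓡₃ t c z.1)^2 + W2t t c z.1 z.2 * 𝐉 t c z.1)
        ∂(μW1.prod μW2) := by
    intro c hc
    have intA : Integrable (fun x => (f x - 𝐆 t x) * (𝓡₁ t c * σ (𝐙 t c x))) πX := by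
      refine integrable_of_bdd (C := CE * (C1 * B)) ?_ ?_
      · exact ((mE H t).mul (measurable_const.mul
          ((hσc H).measurable.comp (mZx H t c)))).aestronglyMeasurable
      · filter_upwards [aeX H] with x hx
        rw [Real.norm_eq_abs, abs_mul, abs_mul]
        exact mul_le_mul (hCE t ht x hx) (mul_le_mul (hC1 t ht c) (H.hB _).1
          (abs_nonneg _) hC10) (by positivity) hCE0
    have intB : Integrable (fun x => (f x - 𝐆 t x) *
        (Ct t c * (deriv σ (𝐙 t c x) * 𝐃𝐙 t c x))) πX := by
      refine integrable_of_bdd (C := CE * (M * (B * CZ))) ?_ ?_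
      · exact ((mE H t).mul (measurable_const.mul (((hσ'm H).comp (mZx H t c)).mul
          (mDZx H t c)))).aestronglyMeasurable
      · filter_upwards [aeX H] with x hx
        rw [Real.norm_eq_abs, abs_mul, abs_mul, abs_mul]
        exact mul_le_mul (hCE t ht x hx) (mul_le_mul ((H.hM t ht).1 c hc)
          (mul_le_mul (H.hB _).2 (hCZ t ht c hc x hx) (abs_nonneg _) H.h0B)
          (by positivity) H.h0M) (by positivity) hCE0
    have hsplit : (∫ x, (f x - 𝐆 t x) * (𝓡₁ t c * σ (𝐙 t c x) +
        Ct t c * (deriv σ (𝐙 t c x) * 𝐃𝐙 t c x)) ∂πX) =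
        (∫ x, (f x - 𝐆 t x) * (𝓡₁ t c * σ (𝐙 t c x)) ∂πX) +
        ∫ x, (f x - 𝐆 t x) * (Ct t c * (deriv σ (𝐙 t c x) * 𝐃𝐙 t c x)) ∂πX := by
      rw [← integral_add intA intB]
      refine integral_congr_ae (Filter.Eventually.of_forall fun x => ?_)
      ring
    -- term A equals R1²
    have hA : (∫ x, (f x - 𝐆 t x) * (𝓡₁ t c * σ (𝐙 t c x)) ∂πX) = (𝓡₁ t c)^2 := by
      have : (∫ x, (f x - 𝐆 t x) * (𝓡₁ t c * σ (𝐙 t c x)) ∂πX) =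
          ∫ x, 𝓡₁ t c * ((f x - 𝐆 t x) * σ (𝐙 t c x)) ∂πX := by
        refine integral_congr_ae (Filter.Eventually.of_forall fun x => ?_); ring
      rw [this, integral_const_mul, ← r1eq H]
      ring
    -- term B: expand DZ and swap with z
    have hBexp : (∫ x, (f x - 𝐆 t x) * (Ct t c * (deriv σ (𝐙 t c x) * 𝐃𝐙 t c x)) ∂πX) =
        ∫ x, ∫ z, ((f x - 𝐆 t x) * (Ct t c * deriv σ (𝐙 t c x))) *
          (𝓡₃ t c z.1 * σ ⟪W1t t z.1, x⟫ + W2t t c z.1 z.2 *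
            (deriv σ ⟪W1t t z.1, x⟫ * ⟪𝓡₂ t z.1, x⟫)) ∂(μW1.prod μW2) ∂πX := by
      refine integral_congr_ae (Filter.Eventually.of_forall fun x => ?_)
      simp only [DZ]
      rw [integral_const_mul]
      ring
    have hintB2 : Integrable (Function.uncurry fun x (z : Euc d × ℝ) =>
        ((f x - 𝐆 t x) * (Ct t c * deriv σ (𝐙 t c x))) *
          (𝓡₃ t c z.1 * σ ⟪W1t t z.1, x⟫ + W2t t c z.1 z.2 *
            (deriv σ ⟪W1t t z.1, x⟫ * ⟪𝓡₂ t z.1, x⟫)))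
        (πX.prod (μW1.prod μW2)) := by
      refine integrable_of_bdd (C := (CE * (M * B)) * (C3 * B + M * (B * (C2 * Kx)))) ?_ ?_
      · refine Measurable.aestronglyMeasurable ?_
        refine Measurable.mul ?_ ?_
        · exact (((mE H t).mul (measurable_const.mul ((hσ'm H).comp (mZx H t c)))).comp
            measurable_fst)
        · refine Measurable.add (Measurable.mul ?_ ?_) (Measurable.mul ?_
            (Measurable.mul ?_ ?_))
          · exact (mR3 σ f πX μc μW1 μW2 SX Ct W1t W2t (hσc H) H.hfm H.hCm H.hW1m H.hW2m
              (hσ'm H) t).comp (measurable_const.prodMk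
                (measurable_fst.comp measurable_snd))
          · exact (hσc H).measurable.comp (((H.hW1m t).comp
              (measurable_fst.comp measurable_snd)).inner measurable_fst)
          · exact (H.hW2m t).comp (measurable_const.prodMk
              ((measurable_fst.comp measurable_snd).prodMk
                (measurable_snd.comp measurable_snd)))
          · exact (hσ'm H).comp (((H.hW1m t).comp
              (measurable_fst.comp measurable_snd)).inner measurable_fst)
          · exact ((mR2 σ f πX μc μW1 μW2 SX Ct W1t W2t (hσc H) H.hfm H.hCm H.hW1m H.hW2m
              (hσ'm H) t).comp (measurable_fst.comp measurable_snd)).inner measurable_fst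
      · have haeX : ∀ᵐ (p : Euc d × (Euc d × ℝ)) ∂(πX.prod (μW1.prod μW2)), p.1 ∈ SX :=
          by
            have h1 : ∀ᵐ p ∂(πX.prod (μW1.prod μW2)), p.1 ∈ SX ∧ p.2 ∈ Set.univ := by
              refine ae_prod_mem H.hSXm MeasurableSet.univ H.hXs ?_
              simp
            filter_upwards [h1] with p hp using hp.1
        have haeZ : ∀ᵐ (p : Euc d × (Euc d × ℝ)) ∂(πX.prod (μW1.prod μW2)),
            p.2.1 ∈ SW1 ∧ p.2.2 ∈ SW2 := by
          have h1 : ∀ᵐ p ∂(πX.prod (μW1.prod μW2)), p.1 ∈ Set.univ ∧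
              (p.2.1 ∈ SW1 ∧ p.2.2 ∈ SW2) := by
            refine ae_prod_mem MeasurableSet.univ (H.hSW1m.prod H.hSW2m) (by simp) ?_
            have : (SW1 ×ˢ SW2)ᶜ ⊆ (SW1ᶜ ×ˢ Set.univ) ∪ (Set.univ ×ˢ SW2ᶜ) := by
              intro z hz
              simp only [Set.mem_compl_iff, Set.mem_prod, not_and] at hz
              by_cases h1 : z.1 ∈ SW1
              · right; simp [hz h1]
              · left; simp [h1]
            refine le_antisymm ?_ zero_le
            refine le_trans (measure_mono this) ?_
            refine le_trans (measure_union_le _ _) ?_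
            simp [Measure.prod_prod, H.hw1s, H.hw2s]
          filter_upwards [h1] with p hp using hp.2
        filter_upwards [haeX, haeZ] with p hp1 hp2
        rw [Function.uncurry_def, Real.norm_eq_abs, abs_mul]
        refine mul_le_mul ?_ ?_ (abs_nonneg _) (mul_nonneg hCE0 (mul_nonneg H.h0M H.h0B))
        · rw [abs_mul, abs_mul]
          exact mul_le_mul (hCE t ht p.1 hp1) (mul_le_mul ((H.hM t ht).1 c hc)
            (H.hB _).2 (abs_nonneg _) H.h0M) (by positivity) hCE0
        · refine (abs_add_le _ _).trans (add_le_add ?_ ?_)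
          · rw [abs_mul]
            exact mul_le_mul (hC3 t ht c hc p.2.1) (H.hB _).1 (abs_nonneg _) hC30
          · rw [abs_mul, abs_mul]
            refine mul_le_mul ((H.hM t ht).2.2 c hc p.2.1 hp2.1 p.2.2 hp2.2) ?_
              (by positivity) H.h0M
            refine mul_le_mul (H.hB _).2 ?_ (abs_nonneg _) H.h0B
            exact (abs_real_inner_le_norm _ _).trans (mul_le_mul (hC2 t ht p.2.1 hp2.1)
              (H.hKx p.1 hp1) (norm_nonneg _) hC20)
    have hswapB := integral_integral_swap hintB2
    -- per z, evaluate inner integral over x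
    have hz : ∀ᵐ z ∂(μW1.prod μW2), (∫ x, ((f x - 𝐆 t x) * (Ct t c * deriv σ (𝐙 t c x))) *
        (𝓡₃ t c z.1 * σ ⟪W1t t z.1, x⟫ + W2t t c z.1 z.2 *
          (deriv σ ⟪W1t t z.1, x⟫ * ⟪𝓡₂ t z.1, x⟫)) ∂πX) =
        (𝓡₃ t c z.1)^2 + W2t t c z.1 z.2 * 𝐉 t c z.1 := by
      filter_upwards [ae_prod_mem H.hSW1m H.hSW2m H.hw1s H.hw2s] with z hzm
      have intP1 : Integrable (fun x => ((f x - 𝐆 t x) * (Ct t c * deriv σ (𝐙 t c x))) *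
          (𝓡₃ t c z.1 * σ ⟪W1t t z.1, x⟫)) πX := by
        refine integrable_of_bdd (C := (CE * (M * B)) * (C3 * B)) ?_ ?_
        · refine Measurable.aestronglyMeasurable ?_
          refine ((mE H t).mul (measurable_const.mul ((hσ'm H).comp (mZx H t c)))).mul
            (measurable_const.mul ((hσc H).measurable.comp
              (((H.hW1m t).comp measurable_const).inner measurable_id)))
        · filter_upwards [aeX H] with x hx
          rw [Real.norm_eq_abs, abs_mul]
          refine mul_le_mul ?_ ?_ (abs_nonneg _) (mul_nonneg hCE0 (mul_nonneg H.h0M H.h0B))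
          · rw [abs_mul, abs_mul]
            exact mul_le_mul (hCE t ht x hx) (mul_le_mul ((H.hM t ht).1 c hc) (H.hB _).2
              (abs_nonneg _) H.h0M) (by positivity) hCE0
          · rw [abs_mul]
            exact mul_le_mul (hC3 t ht c hc z.1) (H.hB _).1 (abs_nonneg _) hC30
      have intP2 : Integrable (fun x => ((f x - 𝐆 t x) * (Ct t c * deriv σ (𝐙 t c x))) *
          (W2t t c z.1 z.2 * (deriv σ ⟪W1t t z.1, x⟫ * ⟪𝓡₂ t z.1, x⟫))) πX := by
        refine integrable_of_bdd (C := (CE * (M * B)) * (M * (B * (C2 * Kx)))) ?_ ?_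
        · refine Measurable.aestronglyMeasurable ?_
          refine ((mE H t).mul (measurable_const.mul ((hσ'm H).comp (mZx H t c)))).mul
            (measurable_const.mul (((hσ'm H).comp
              (((H.hW1m t).comp measurable_const).inner measurable_id)).mul
              (measurable_const.inner measurable_id)))
        · filter_upwards [aeX H] with x hx
          rw [Real.norm_eq_abs, abs_mul]
          refine mul_le_mul ?_ ?_ (abs_nonneg _) (mul_nonneg hCE0 (mul_nonneg H.h0M H.h0B))
          · rw [abs_mul, abs_mul]
            exact mul_le_mul (hCE t ht x hx) (mul_le_mul ((H.hM t ht).1 c hc) (H.hB _).2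
              (abs_nonneg _) H.h0M) (by positivity) hCE0
          · rw [abs_mul, abs_mul]
            refine mul_le_mul ((H.hM t ht).2.2 c hc z.1 hzm.1 z.2 hzm.2) ?_
              (by positivity) H.h0M
            refine mul_le_mul (H.hB _).2 ?_ (abs_nonneg _) H.h0B
            exact (abs_real_inner_le_norm _ _).trans (mul_le_mul (hC2 t ht z.1 hzm.1)
              (H.hKx x hx) (norm_nonneg _) hC20)
      have hsplit2 : (∫ x, ((f x - 𝐆 t x) * (Ct t c * deriv σ (𝐙 t c x))) *
          (𝓡₃ t c z.1 * σ ⟪W1t t z.1, x⟫ + W2t t c z.1 z.2 *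
            (deriv σ ⟪W1t t z.1, x⟫ * ⟪𝓡₂ t z.1, x⟫)) ∂πX) =
          (∫ x, ((f x - 𝐆 t x) * (Ct t c * deriv σ (𝐙 t c x))) *
            (𝓡₃ t c z.1 * σ ⟪W1t t z.1, x⟫) ∂πX) +
          ∫ x, ((f x - 𝐆 t x) * (Ct t c * deriv σ (𝐙 t c x))) *
            (W2t t c z.1 z.2 * (deriv σ ⟪W1t t z.1, x⟫ * ⟪𝓡₂ t z.1, x⟫)) ∂πX := by
        rw [← integral_add intP1 intP2]
        refine integral_congr_ae (Filter.Eventually.of_forall fun x => ?_)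
        ring
      have hPA : (∫ x, ((f x - 𝐆 t x) * (Ct t c * deriv σ (𝐙 t c x))) *
          (𝓡₃ t c z.1 * σ ⟪W1t t z.1, x⟫) ∂πX) = (𝓡₃ t c z.1)^2 := by
        have : (∫ x, ((f x - 𝐆 t x) * (Ct t c * deriv σ (𝐙 t c x))) *
            (𝓡₃ t c z.1 * σ ⟪W1t t z.1, x⟫) ∂πX) =
            ∫ x, 𝓡₃ t c z.1 * ((f x - 𝐆 t x) * Ct t c * deriv σ (𝐙 t c x) *
              σ ⟪W1t t z.1, x⟫) ∂πX := by
          refine integral_congr_ae (Filter.Eventually.of_forall fun x => ?_); ring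
        rw [this, integral_const_mul, ← r3eq H]
        ring
      have hPB : (∫ x, ((f x - 𝐆 t x) * (Ct t c * deriv σ (𝐙 t c x))) *
          (W2t t c z.1 z.2 * (deriv σ ⟪W1t t z.1, x⟫ * ⟪𝓡₂ t z.1, x⟫)) ∂πX) =
          W2t t c z.1 z.2 * 𝐉 t c z.1 := by
        have : (∫ x, ((f x - 𝐆 t x) * (Ct t c * deriv σ (𝐙 t c x))) *
            (W2t t c z.1 z.2 * (deriv σ ⟪W1t t z.1, x⟫ * ⟪𝓡₂ t z.1, x⟫)) ∂πX) =
            ∫ x, W2t t c z.1 z.2 * ((f x - 𝐆 t x) * (Ct t c * deriv σ (𝐙 t c x)) *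
              deriv σ ⟪W1t t z.1, x⟫ * ⟪𝓡₂ t z.1, x⟫) ∂πX := by
          refine integral_congr_ae (Filter.Eventually.of_forall fun x => ?_); ring
        rw [this, integral_const_mul]
        rfl
      rw [hsplit2, hPA, hPB]
    have hB : (∫ x, (f x - 𝐆 t x) * (Ct t c * (deriv σ (𝐙 t c x) * 𝐃𝐙 t c x)) ∂πX) =
        ∫ z, ((𝓡₃ t c z.1)^2 + W2t t c z.1 z.2 * 𝐉 t c z.1) ∂(μW1.prod μW2) := by
      rw [hBexp, hswapB]
      exact integral_congr_ae hz
    rw [hsplit, hA, hB]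
  -- step 4: apply h3 inside the c-integral
  rw [h1, h2]
  have h4 : (∫ c, ∫ x, (f x - 𝐆 t x) * (𝓡₁ t c * σ (𝐙 t c x) +
      Ct t c * (deriv σ (𝐙 t c x) * 𝐃𝐙 t c x)) ∂πX ∂μc) =
      ∫ c, ((𝓡₁ t c)^2 + ∫ z, ((𝓡₃ t c z.1)^2 + W2t t c z.1 z.2 * 𝐉 t c z.1)
        ∂(μW1.prod μW2)) ∂μc := by
    refine integral_congr_ae ?_
    filter_upwards [aeC H] with c hc
    exact h3 c hc
  rw [h4]
  -- measurable inner functions of c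
  have mz1 : Measurable (fun c => ∫ z, (𝓡₃ t c z.1)^2 ∂(μW1.prod μW2)) := by
    have h0 : Measurable (fun q : ℝ × (Euc d × ℝ) => (𝓡₃ t q.1 q.2.1)^2) :=
      ((mR3 σ f πX μc μW1 μW2 SX Ct W1t W2t (hσc H) H.hfm H.hCm H.hW1m H.hW2m
        (hσ'm H) t).comp (measurable_fst.prodMk
          (measurable_fst.comp measurable_snd))).pow_const 2
    exact (h0.stronglyMeasurable.integral_prod_right' (ν := μW1.prod μW2)).measurable
  have mz2 : Measurable (fun c => ∫ z, W2t t c z.1 z.2 * 𝐉 t c z.1 ∂(μW1.prod μW2)) := by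
    have h0 : Measurable (fun q : ℝ × (Euc d × ℝ) => W2t t q.1 q.2.1 q.2.2 * 𝐉 t q.1 q.2.1) := by
      refine Measurable.mul ?_ ?_
      · exact (H.hW2m t).comp (measurable_fst.prodMk
          ((measurable_fst.comp measurable_snd).prodMk (measurable_snd.comp measurable_snd)))
      · exact (mJ H t).comp (measurable_fst.prodMk (measurable_fst.comp measurable_snd))
    exact (h0.stronglyMeasurable.integral_prod_right' (ν := μW1.prod μW2)).measurable
  have mz12 : Measurable (fun c => ∫ z, ((𝓡₃ t c z.1)^2 + W2t t c z.1 z.2 * 𝐉 t c z.1)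
      ∂(μW1.prod μW2)) := by
    have h0 : Measurable (fun q : ℝ × (Euc d × ℝ) =>
        (𝓡₃ t q.1 q.2.1)^2 + W2t t q.1 q.2.1 q.2.2 * 𝐉 t q.1 q.2.1) := by
      refine Measurable.add ?_ (Measurable.mul ?_ ?_)
      · exact ((mR3 σ f πX μc μW1 μW2 SX Ct W1t W2t (hσc H) H.hfm H.hCm H.hW1m H.hW2m
          (hσ'm H) t).comp (measurable_fst.prodMk
            (measurable_fst.comp measurable_snd))).pow_const 2
      · exact (H.hW2m t).comp (measurable_fst.prodMk
          ((measurable_fst.comp measurable_snd).prodMk (measurable_snd.comp measurable_snd)))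
      · exact (mJ H t).comp (measurable_fst.prodMk (measurable_fst.comp measurable_snd))
    exact (h0.stronglyMeasurable.integral_prod_right' (ν := μW1.prod μW2)).measurable
  -- integrable pieces over z (for c ∈ SC) and over c
  have intz1 : ∀ c ∈ SC, Integrable (fun z : Euc d × ℝ => (𝓡₃ t c z.1)^2)
      (μW1.prod μW2) := by
    intro c hc
    refine integrable_of_bdd (C := C3^2) ?_ ?_
    · exact (((mR3 σ f πX μc μW1 μW2 SX Ct W1t W2t (hσc H) H.hfm H.hCm H.hW1m H.hW2m
        (hσ'm H) t).comp (measurable_const.prodMk measurable_fst)).pow_const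
          2).aestronglyMeasurable
    · refine Filter.Eventually.of_forall (fun z => ?_)
      rw [Real.norm_eq_abs, abs_pow]
      exact pow_le_pow_left₀ (abs_nonneg _) (hC3 t ht c hc z.1) 2
  have intz2 : ∀ c ∈ SC, Integrable (fun z : Euc d × ℝ =>
      W2t t c z.1 z.2 * 𝐉 t c z.1) (μW1.prod μW2) := by
    intro c hc
    refine integrable_of_bdd (C := M * CJ) ?_ ?_
    · refine Measurable.aestronglyMeasurable ?_
      refine Measurable.mul ?_ ?_
      · exact (H.hW2m t).comp (measurable_const.prodMk
          (measurable_fst.prodMk measurable_snd))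
      · exact (mJ H t).comp (measurable_const.prodMk measurable_fst)
    · filter_upwards [ae_prod_mem H.hSW1m H.hSW2m H.hw1s H.hw2s] with z hz
      rw [Real.norm_eq_abs, abs_mul]
      exact mul_le_mul ((H.hM t ht).2.2 c hc z.1 hz.1 z.2 hz.2)
        (hCJ t ht c hc z.1 hz.1) (abs_nonneg _) H.h0M
  have intc1 : Integrable (fun c => (𝓡₁ t c)^2) μc := by
    refine integrable_of_bdd (C := C1^2) ?_ ?_
    · exact ((mR1 σ f πX μc μW1 μW2 SX Ct W1t W2t (hσc H) H.hfm H.hCm H.hW1m H.hW2m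
        t).pow_const 2).aestronglyMeasurable
    · refine Filter.Eventually.of_forall (fun c => ?_)
      rw [Real.norm_eq_abs, abs_pow]
      exact pow_le_pow_left₀ (abs_nonneg _) (hC1 t ht c) 2
  have intcz1 : Integrable (fun c => ∫ z, (𝓡₃ t c z.1)^2 ∂(μW1.prod μW2)) μc := by
    refine integrable_of_bdd (C := C3^2) mz1.aestronglyMeasurable ?_
    filter_upwards [aeC H] with c hc
    rw [Real.norm_eq_abs, ← Real.norm_eq_abs]
    refine norm_integral_le_of_bdd ?_
    refine Filter.Eventually.of_forall (fun z => ?_)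
    rw [Real.norm_eq_abs, abs_pow]
    exact pow_le_pow_left₀ (abs_nonneg _) (hC3 t ht c hc z.1) 2
  have intcz2 : Integrable (fun c => ∫ z, W2t t c z.1 z.2 * 𝐉 t c z.1 ∂(μW1.prod μW2))
      μc := by
    refine integrable_of_bdd (C := M * CJ) mz2.aestronglyMeasurable ?_
    filter_upwards [aeC H] with c hc
    rw [Real.norm_eq_abs, ← Real.norm_eq_abs]
    refine norm_integral_le_of_bdd ?_
    filter_upwards [ae_prod_mem H.hSW1m H.hSW2m H.hw1s H.hw2s] with z hz
    rw [Real.norm_eq_abs, abs_mul]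
    exact mul_le_mul ((H.hM t ht).2.2 c hc z.1 hz.1 z.2 hz.2)
      (hCJ t ht c hc z.1 hz.1) (abs_nonneg _) H.h0M
  have intcz12 : Integrable (fun c => ∫ z, ((𝓡₃ t c z.1)^2 + W2t t c z.1 z.2 * 𝐉 t c z.1)
      ∂(μW1.prod μW2)) μc := by
    refine integrable_of_bdd (C := C3^2 + M * CJ) mz12.aestronglyMeasurable ?_
    filter_upwards [aeC H] with c hc
    rw [Real.norm_eq_abs, ← Real.norm_eq_abs]
    refine norm_integral_le_of_bdd ?_
    filter_upwards [ae_prod_mem H.hSW1m H.hSW2m H.hw1s H.hw2s] with z hz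
    rw [Real.norm_eq_abs]
    refine (abs_add_le _ _).trans (add_le_add ?_ ?_)
    · rw [abs_pow]
      exact pow_le_pow_left₀ (abs_nonneg _) (hC3 t ht c hc z.1) 2
    · rw [abs_mul]
      exact mul_le_mul ((H.hM t ht).2.2 c hc z.1 hz.1 z.2 hz.2)
        (hCJ t ht c hc z.1 hz.1) (abs_nonneg _) H.h0M
  -- step 5: split the c-integral
  have h5 : (∫ c, ((𝓡₁ t c)^2 + ∫ z, ((𝓡₃ t c z.1)^2 + W2t t c z.1 z.2 * 𝐉 t c z.1)
      ∂(μW1.prod μW2)) ∂μc) =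
      (∫ c, (𝓡₁ t c)^2 ∂μc) + ∫ c, (∫ z, ((𝓡₃ t c z.1)^2 + W2t t c z.1 z.2 * 𝐉 t c z.1)
        ∂(μW1.prod μW2)) ∂μc := integral_add intc1 intcz12
  rw [h5]
  -- step 6: split the z-integral
  have h6 : (∫ c, (∫ z, ((𝓡₃ t c z.1)^2 + W2t t c z.1 z.2 * 𝐉 t c z.1)
      ∂(μW1.prod μW2)) ∂μc) =
      (∫ c, (∫ z, (𝓡₃ t c z.1)^2 ∂(μW1.prod μW2)) ∂μc) +
      ∫ c, (∫ z, W2t t c z.1 z.2 * 𝐉 t c z.1 ∂(μW1.prod μW2)) ∂μc := by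
    rw [← integral_add intcz1 intcz2]
    refine integral_congr_ae ?_
    filter_upwards [aeC H] with c hc
    exact integral_add (intz1 c hc) (intz2 c hc)
  rw [h6]
  -- step 7: reduce the R3 double integral to μW1
  have h7 : (∫ c, (∫ z, (𝓡₃ t c z.1)^2 ∂(μW1.prod μW2)) ∂μc) =
      ∫ c, (∫ w, (𝓡₃ t c w)^2 ∂μW1) ∂μc := by
    refine integral_congr_ae (Filter.Eventually.of_forall fun c => ?_)
    refine integral_fst_prod (μ := μW1) (ν := μW2) (g := fun w => (𝓡₃ t c w)^2) ?_
    exact (((mR3 σ f πX μc μW1 μW2 SX Ct W1t W2t (hσc H) H.hfm H.hCm H.hW1m H.hW2m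
      (hσ'm H) t).comp (measurable_const.prodMk measurable_id)).pow_const
        2).aestronglyMeasurable
  rw [h7]
  -- step 8: the R2 term
  have h8 : (∫ c, (∫ z, W2t t c z.1 z.2 * 𝐉 t c z.1 ∂(μW1.prod μW2)) ∂μc) =
      ∫ w, ‖𝓡₂ t w‖^2 ∂μW1 := by
    -- 8a: inner u integral
    have h8a : ∀ c ∈ SC, (∫ z, W2t t c z.1 z.2 * 𝐉 t c z.1 ∂(μW1.prod μW2)) =
        ∫ w, (∫ u, W2t t c w u ∂μW2) * 𝐉 t c w ∂μW1 := by
      intro c hc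
      rw [integral_prod _ (intz2 c hc)]
      refine integral_congr_ae (Filter.Eventually.of_forall fun w => ?_)
      exact integral_mul_const (𝐉 t c w) (fun u => W2t t c w u)
    have h8a' : (∫ c, (∫ z, W2t t c z.1 z.2 * 𝐉 t c z.1 ∂(μW1.prod μW2)) ∂μc) =
        ∫ c, ∫ w, (∫ u, W2t t c w u ∂μW2) * 𝐉 t c w ∂μW1 ∂μc := by
      refine integral_congr_ae ?_
      filter_upwards [aeC H] with c hc
      exact h8a c hc
    rw [h8a']
    -- 8b: swap c and w
    have hint8 : Integrable (Function.uncurry fun c w =>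
        (∫ u, W2t t c w u ∂μW2) * 𝐉 t c w) (μc.prod μW1) := by
      refine integrable_of_bdd (C := CI * CJ) ?_ ?_
      · exact ((mIu μW2 W2t H.hW2m t).mul (mJ H t)).aestronglyMeasurable
      · filter_upwards [ae_prod_mem H.hSCm H.hSW1m H.hcs H.hw1s] with z hz
        rw [Function.uncurry_def, Real.norm_eq_abs, abs_mul]
        exact mul_le_mul (hCI t ht z.1 hz.1 z.2 hz.2) (hCJ t ht z.1 hz.1 z.2 hz.2)
          (abs_nonneg _) hCI0
    rw [integral_integral_swap hint8]
    -- 8c: per w the c-integral gives ‖R2‖²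
    refine integral_congr_ae ?_
    filter_upwards [aeW1 H] with w hw
    have intR2v : Integrable (fun x =>
        ((f x - 𝐆 t x) * 𝐕 t w x * deriv σ ⟪W1t t w, x⟫) • x) πX := by
      obtain ⟨CV, hCV0, hCV⟩ := bV H
      refine integrable_of_bdd (C := CE * CV * B * Kx) ?_ ?_
      · refine Measurable.aestronglyMeasurable ?_
        refine Measurable.fun_smul ?_ measurable_id
        refine ((mE H t).mul ((mV σ μc μW1 μW2 Ct W1t W2t (hσc H) H.hCm H.hW1m H.hW2m
          (hσ'm H) t).comp (measurable_const.prodMk measurable_id))).mul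
          ((hσ'm H).comp (measurable_const.inner measurable_id))
      · filter_upwards [aeX H] with x hx
        rw [norm_smul, Real.norm_eq_abs, abs_mul, abs_mul]
        refine mul_le_mul (mul_le_mul (mul_le_mul (hCE t ht x hx) (hCV t ht w hw x)
          (abs_nonneg _) hCE0) (H.hB _).2 (abs_nonneg _) (mul_nonneg hCE0 hCV0))
          (H.hKx x hx) (norm_nonneg _) (mul_nonneg (mul_nonneg hCE0 hCV0) H.h0B)
    have e2 : ‖𝓡₂ t w‖^2 = ∫ x, ⟪𝓡₂ t w,
        ((f x - 𝐆 t x) * 𝐕 t w x * deriv σ ⟪W1t t w, x⟫) • x⟫ ∂πX := by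
      rw [← real_inner_self_eq_norm_sq]
      nth_rewrite 2 [r2eq H]
      exact (integral_inner intR2v _).symm
    have e3 : (∫ x, ⟪𝓡₂ t w,
        ((f x - 𝐆 t x) * 𝐕 t w x * deriv σ ⟪W1t t w, x⟫) • x⟫ ∂πX) =
        ∫ x, ∫ c, ((f x - 𝐆 t x) * deriv σ ⟪W1t t w, x⟫ * ⟪𝓡₂ t w, x⟫) *
          (Ct t c * deriv σ (𝐙 t c x) * (∫ u, W2t t c w u ∂μW2)) ∂μc ∂πX := by
      refine integral_congr_ae (Filter.Eventually.of_forall fun x => ?_)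
      simp only [real_inner_smul_right]
      have : (f x - 𝐆 t x) * 𝐕 t w x * deriv σ ⟪W1t t w, x⟫ * ⟪𝓡₂ t w, x⟫ =
          ((f x - 𝐆 t x) * deriv σ ⟪W1t t w, x⟫ * ⟪𝓡₂ t w, x⟫) * 𝐕 t w x := by ring
      rw [this]
      simp only [limV]
      rw [integral_const_mul]
    have hint9 : Integrable (Function.uncurry fun x c =>
        ((f x - 𝐆 t x) * deriv σ ⟪W1t t w, x⟫ * ⟪𝓡₂ t w, x⟫) *
          (Ct t c * deriv σ (𝐙 t c x) * (∫ u, W2t t c w u ∂μW2))) (πX.prod μc) := by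
      refine integrable_of_bdd (C := CE * B * (C2 * Kx) * (M * B * CI)) ?_ ?_
      · refine Measurable.aestronglyMeasurable ?_
        refine Measurable.mul ?_ ?_
        · refine (((mE H t).comp measurable_fst).mul ((hσ'm H).comp
            (measurable_const.inner measurable_fst))).mul
            ((measurable_const.inner measurable_fst))
        · refine (((H.hCm t).comp measurable_snd).mul ((hσ'm H).comp
            ((mZ σ μW1 μW2 W1t W2t (hσc H) H.hW1m H.hW2m t).comp
              (measurable_snd.prodMk measurable_fst)))).mul
            ((mIuc H t w).comp measurable_snd)
      · filter_upwards [ae_prod_mem H.hSXm H.hSCm H.hXs H.hcs] with z hz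
        rw [Function.uncurry_def, Real.norm_eq_abs, abs_mul]
        refine mul_le_mul ?_ ?_ (abs_nonneg _)
          (mul_nonneg (mul_nonneg hCE0 H.h0B) (mul_nonneg hC20 H.h0Kx))
        · rw [abs_mul, abs_mul]
          refine mul_le_mul (mul_le_mul (hCE t ht z.1 hz.1) (H.hB _).2 (abs_nonneg _) hCE0)
            ?_ (abs_nonneg _) (mul_nonneg hCE0 H.h0B)
          exact (abs_real_inner_le_norm _ _).trans (mul_le_mul (hC2 t ht w hw)
            (H.hKx z.1 hz.1) (norm_nonneg _) hC20)
        · rw [abs_mul, abs_mul]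
          refine mul_le_mul (mul_le_mul ((H.hM t ht).1 z.2 hz.2) (H.hB _).2
            (abs_nonneg _) H.h0M) (hCI t ht z.2 hz.2 w hw) (abs_nonneg _)
            (mul_nonneg H.h0M H.h0B)
    have e5 : ∀ c : ℝ, (∫ x, ((f x - 𝐆 t x) * deriv σ ⟪W1t t w, x⟫ * ⟪𝓡₂ t w, x⟫) *
        (Ct t c * deriv σ (𝐙 t c x) * (∫ u, W2t t c w u ∂μW2)) ∂πX) =
        (∫ u, W2t t c w u ∂μW2) * 𝐉 t c w := by
      intro c
      have : (fun x => ((f x - 𝐆 t x) * deriv σ ⟪W1t t w, x⟫ * ⟪𝓡₂ t w, x⟫) *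
          (Ct t c * deriv σ (𝐙 t c x) * (∫ u, W2t t c w u ∂μW2))) =
          fun x => (∫ u, W2t t c w u ∂μW2) * ((f x - 𝐆 t x) *
            (Ct t c * deriv σ (𝐙 t c x)) * deriv σ ⟪W1t t w, x⟫ * ⟪𝓡₂ t w, x⟫) := by
        funext x; ring
      rw [this, integral_const_mul]
      rfl
    rw [e2, e3, integral_integral_swap hint9]
    refine integral_congr_ae (Filter.Eventually.of_forall fun c => ?_)
    exact (e5 c).symm
  rw [h8]
  simp only [Phi]
  ring

end Aux
end LLD


namespace LLD
section Aux
variable {d : ℕ} {σ : ℝ → ℝ} {f : Euc d → ℝ}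
  {πX : Measure (Euc d)} {μc : Measure ℝ} {μW1 : Measure (Euc d)} {μW2 : Measure ℝ}
  {SX : Set (Euc d)} {SC : Set ℝ} {SW1 : Set (Euc d)} {SW2 : Set ℝ}
  {Ct : ℝ → ℝ → ℝ} {W1t : ℝ → Euc d → Euc d} {W2t : ℝ → ℝ → Euc d → ℝ → ℝ}
  {M B Mf Kx : ℝ}
  (H : Hyp σ f πX μc μW1 μW2 SX SC SW1 SW2 Ct W1t W2t M B Mf Kx)

local notation "𝐆" => limG σ μc μW1 μW2 Ct W1t W2t
local notation "𝚽" => Phi σ f πX SX μc μW1 μW2 Ct W1t W2t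
local notation "𝐈" => Set.Icc (0:ℝ) 1

include H

lemma hLint {t₀ : ℝ} (ht₀ : t₀ ∈ Set.Ioo (0:ℝ) 1) :
    HasDerivAt (fun t => ∫ x, (f x - 𝐆 t x)^2 ∂πX) (-(2 * 𝚽 t₀)) t₀ := by
  haveI := H.pX
  have h := dLossAux H ht₀
  rw [integral_const_mul, keyId H (Set.Ioo_subset_Icc_self ht₀)] at h
  convert h using 1
  ring

lemma projmem (t : ℝ) : max 0 (min 1 t) ∈ 𝐈 :=
  ⟨le_max_left _ _, max_le (by norm_num) (min_le_left _ _)⟩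

omit H in
lemma projeq {t : ℝ} (ht : t ∈ 𝐈) : max 0 (min 1 t) = t := by
  rw [min_eq_right ht.2, max_eq_right ht.1]

lemma cPhic : Continuous (fun t => 𝚽 (max 0 (min 1 t))) := by
  refine (cPhi H).comp_continuous ?_ (projmem H)
  exact continuous_const.max (continuous_const.min continuous_id)

lemma hGderiv (t : ℝ) :
    HasDerivAt (fun u => (∫ x, (f x - 𝐆 0 x)^2 ∂πX) -
      ∫ s in (0:ℝ)..u, 2 * 𝚽 (max 0 (min 1 s)))
      (-(2 * 𝚽 (max 0 (min 1 t)))) t := by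
  have hc : Continuous (fun s => 2 * 𝚽 (max 0 (min 1 s))) :=
    continuous_const.mul (cPhic H)
  have hint : HasDerivAt (fun u => ∫ s in (0:ℝ)..u, 2 * 𝚽 (max 0 (min 1 s)))
      (2 * 𝚽 (max 0 (min 1 t))) t := by
    refine intervalIntegral.integral_hasDerivAt_right ?_ ?_ ?_
    · exact hc.intervalIntegrable _ _
    · exact hc.stronglyMeasurable.stronglyMeasurableAtFilter
    · exact hc.continuousAt
  exact hint.const_sub _

lemma hEqLG : Set.EqOn (fun t => ∫ x, (f x - 𝐆 t x)^2 ∂πX)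
    (fun u => (∫ x, (f x - 𝐆 0 x)^2 ∂πX) -
      ∫ s in (0:ℝ)..u, 2 * 𝚽 (max 0 (min 1 s))) 𝐈 := by
  haveI := H.pX
  set L : ℝ → ℝ := fun t => ∫ x, (f x - 𝐆 t x)^2 ∂πX with hL
  set G : ℝ → ℝ := fun u => L 0 - ∫ s in (0:ℝ)..u, 2 * 𝚽 (max 0 (min 1 s)) with hG
  have hGc : Continuous G := by
    refine continuous_iff_continuousAt.mpr (fun t => ?_)
    exact (hGderiv H t).continuousAt
  have hDc : ContinuousOn (fun t => L t - G t) 𝐈 := (cLoss H).sub hGc.continuousOn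
  have hDd : ∀ t ∈ interior 𝐈, HasDerivAt (fun t => L t - G t) 0 t := by
    intro t ht
    rw [interior_Icc] at ht
    have h1 := (hLint H ht).sub (hGderiv H t)
    have h2 : -(2 * 𝚽 t) - -(2 * 𝚽 (max 0 (min 1 t))) = 0 := by
      rw [projeq (Set.Ioo_subset_Icc_self ht)]; ring
    rwa [h2] at h1
  have hdiff : DifferentiableOn ℝ (fun t => L t - G t) (interior 𝐈) :=
    fun t ht => ((hDd t ht).differentiableAt).differentiableWithinAt
  have hmono : MonotoneOn (fun t => L t - G t) 𝐈 := by
    refine monotoneOn_of_deriv_nonneg (convex_Icc 0 1) hDc hdiff (fun t ht => ?_)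
    rw [(hDd t ht).deriv]
  have hanti : AntitoneOn (fun t => L t - G t) 𝐈 := by
    refine antitoneOn_of_deriv_nonpos (convex_Icc 0 1) hDc hdiff (fun t ht => ?_)
    rw [(hDd t ht).deriv]
  have h0 : (0:ℝ) ∈ 𝐈 := by norm_num
  have hD0 : L 0 - G 0 = 0 := by
    simp [hG, intervalIntegral.integral_same]
  intro t ht
  have h1 : L 0 - G 0 ≤ L t - G t := hmono h0 ht ht.1
  have h2 : L t - G t ≤ L 0 - G 0 := hanti h0 ht ht.1
  have : L t = G t := by linarith
  exact this

lemma mainHyp :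
    (∀ t ∈ 𝐈, HasDerivWithinAt (fun s => (1/2 : ℝ) * ∫ x in SX, (f x - 𝐆 s x)^2 ∂πX)
      (-𝚽 t) 𝐈 t) ∧
    (∀ s ∈ 𝐈, ∀ t ∈ 𝐈, s ≤ t →
      (1/2 : ℝ) * (∫ x in SX, (f x - 𝐆 t x)^2 ∂πX) ≤
      (1/2 : ℝ) * ∫ x in SX, (f x - 𝐆 s x)^2 ∂πX) := by
  haveI := H.pX
  have hres : ∀ s : ℝ, (∫ x in SX, (f x - 𝐆 s x)^2 ∂πX) = ∫ x, (f x - 𝐆 s x)^2 ∂πX := by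
    intro s; rw [resX H]
  constructor
  · intro t ht
    have h1 : HasDerivWithinAt (fun u => (∫ x, (f x - 𝐆 0 x)^2 ∂πX) -
        ∫ s in (0:ℝ)..u, 2 * 𝚽 (max 0 (min 1 s)))
        (-(2 * 𝚽 (max 0 (min 1 t)))) 𝐈 t := (hGderiv H t).hasDerivWithinAt
    have h2 : HasDerivWithinAt (fun t => ∫ x, (f x - 𝐆 t x)^2 ∂πX)
        (-(2 * 𝚽 (max 0 (min 1 t)))) 𝐈 t :=
      h1.congr (fun y hy => hEqLG H hy) (hEqLG H ht)
    have h3 := h2.const_mul (1/2 : ℝ)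
    have h4 : (fun s => (1/2 : ℝ) * ∫ x in SX, (f x - 𝐆 s x)^2 ∂πX) =
        fun s => (1/2 : ℝ) * ∫ x, (f x - 𝐆 s x)^2 ∂πX := by
      funext s; rw [hres s]
    rw [h4]
    refine h3.congr_deriv ?_
    rw [projeq ht]
    ring
  · intro s hs t ht hst
    rw [hres s, hres t]
    have es : (∫ x, (f x - 𝐆 s x)^2 ∂πX) = (∫ x, (f x - 𝐆 0 x)^2 ∂πX) -
        ∫ u in (0:ℝ)..s, 2 * 𝚽 (max 0 (min 1 u)) := hEqLG H hs
    have et : (∫ x, (f x - 𝐆 t x)^2 ∂πX) = (∫ x, (f x - 𝐆 0 x)^2 ∂πX) -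
        ∫ u in (0:ℝ)..t, 2 * 𝚽 (max 0 (min 1 u)) := hEqLG H ht
    rw [es, et]
    have hc : Continuous (fun u => 2 * 𝚽 (max 0 (min 1 u))) :=
      continuous_const.mul (cPhic H)
    have h1 : (∫ u in (0:ℝ)..s, 2 * 𝚽 (max 0 (min 1 u))) ≤
        ∫ u in (0:ℝ)..t, 2 * 𝚽 (max 0 (min 1 u)) := by
      rw [← intervalIntegral.integral_add_adjacent_intervals
        (hc.intervalIntegrable 0 s) (hc.intervalIntegrable s t)]
      have h2 : 0 ≤ ∫ u in s..t, 2 * 𝚽 (max 0 (min 1 u)) := by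
        refine intervalIntegral.integral_nonneg hst (fun u _ => ?_)
        exact mul_nonneg (by norm_num) (Phi0 H _)
      linarith
    have := sub_le_sub_left h1 (∫ x, (f x - 𝐆 0 x)^2 ∂πX)
    linarith
end Aux
end LLD


/-- **Energy dissipation for the limiting system.** Along a uniformly bounded solution of
the limiting two-layer system with target data `y = f(x)`, the limiting loss
`L̄(Θ_t) = ½∫(f − g_t)² dπ_X` is differentiable in `t` with derivative
`−(∫ R₁² dμ_c + ∫ ‖R₂‖² dμ_{W¹} + ∫∫ R₃² dμ_{W¹} dμ_c) ≤ 0`; in particular it is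
nonincreasing. -/
theorem limit_loss_dissipation
    (d : ℕ)
    (SX : Set (Euc d)) (SC : Set ℝ) (SW1 : Set (Euc d)) (SW2 : Set ℝ)
    (hSX : IsCompact SX) (hSC : IsCompact SC) (hSW1 : IsCompact SW1) (hSW2 : IsCompact SW2)
    (σ : ℝ → ℝ) (hσ : ContDiff ℝ 2 σ)
    (hσb : ∃ B, ∀ z, |σ z| ≤ B ∧ |deriv σ z| ≤ B ∧ |deriv (deriv σ) z| ≤ B)
    (πX : Measure (Euc d)) (hπX : IsProbabilityMeasure πX) (hπXs : πX SXᶜ = 0)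
    (f : Euc d → ℝ) (hf : Measurable f) (hfb : ∃ M, ∀ x ∈ SX, |f x| ≤ M)
    (μc : Measure ℝ) (μW1 : Measure (Euc d)) (μW2 : Measure ℝ)
    (hμc : IsProbabilityMeasure μc) (hμW1 : IsProbabilityMeasure μW1)
    (hμW2 : IsProbabilityMeasure μW2)
    (hμcs : μc SCᶜ = 0) (hμW1s : μW1 SW1ᶜ = 0) (hμW2s : μW2 SW2ᶜ = 0)
    (π : Measure (Euc d × ℝ)) (hπ : π = Measure.map (fun x => (x, f x)) πX)
    (Ct : ℝ → ℝ → ℝ) (W1t : ℝ → Euc d → Euc d) (W2t : ℝ → ℝ → Euc d → ℝ → ℝ)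
    (hsol : IsLimitSolution σ π μc μW1 μW2 SC SW1 SW2 Ct W1t W2t)
    (hbd : ∃ M : ℝ, ∀ t ∈ Set.Icc (0:ℝ) 1,
      (∀ c ∈ SC, |Ct t c| ≤ M) ∧ (∀ w ∈ SW1, ‖W1t t w‖ ≤ M) ∧
      (∀ c ∈ SC, ∀ w ∈ SW1, ∀ u ∈ SW2, |W2t t c w u| ≤ M)) :
    (∀ t ∈ Set.Icc (0:ℝ) 1,
      HasDerivWithinAt
        (fun s => (1/2) * ∫ x in SX, (f x - limG σ μc μW1 μW2 Ct W1t W2t s x)^2 ∂πX)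
        (-((∫ c, (limR1 σ f πX SX μc μW1 μW2 Ct W1t W2t t c)^2 ∂μc)
           + (∫ w, ‖limR2 σ f πX SX μc μW1 μW2 Ct W1t W2t t w‖^2 ∂μW1)
           + ∫ c, (∫ w, (limR3 σ f πX SX μc μW1 μW2 Ct W1t W2t t c w)^2 ∂μW1) ∂μc))
        (Set.Icc (0:ℝ) 1) t
      ∧
      -((∫ c, (limR1 σ f πX SX μc μW1 μW2 Ct W1t W2t t c)^2 ∂μc)
        + (∫ w, ‖limR2 σ f πX SX μc μW1 μW2 Ct W1t W2t t w‖^2 ∂μW1)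
        + ∫ c, (∫ w, (limR3 σ f πX SX μc μW1 μW2 Ct W1t W2t t c w)^2 ∂μW1) ∂μc) ≤ 0)
    ∧
    (∀ s ∈ Set.Icc (0:ℝ) 1, ∀ t ∈ Set.Icc (0:ℝ) 1, s ≤ t →
      (1/2) * (∫ x in SX, (f x - limG σ μc μW1 μW2 Ct W1t W2t t x)^2 ∂πX)
        ≤ (1/2) * ∫ x in SX, (f x - limG σ μc μW1 μW2 Ct W1t W2t s x)^2 ∂πX) := by
  
  haveI := hπX; haveI := hμc; haveI := hμW1; haveI := hμW2
  obtain ⟨hc1, hc2, hc3, hm1, hm2, hm3, he1, he2, he3⟩ := hsol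
  obtain ⟨B₀, hB₀⟩ := hσb
  obtain ⟨Mf₀, hMf₀⟩ := hfb
  obtain ⟨M₀, hM₀⟩ := hbd
  obtain ⟨K₀, hK₀⟩ := isBounded_iff_forall_norm_le.mp hSX.isBounded
  have hσc : Continuous σ := hσ.continuous
  have hσ'm : Measurable (deriv σ) := (hσ.continuous_deriv one_le_two).measurable
  have hresX : πX.restrict SX = πX :=
    Measure.restrict_eq_self_of_ae_mem (LLD.ae_mem_of_compl_null hπXs)
  have hφm : AEMeasurable (fun x : Euc d => (x, f x)) πX :=
    (measurable_id.prodMk hf).aemeasurable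
  have convC : ∀ s c : ℝ, (∫ p, (p.2 - limG σ μc μW1 μW2 Ct W1t W2t s p.1) *
      σ (limZ σ μW1 μW2 W1t W2t s c p.1) ∂π) =
      limR1 σ f πX SX μc μW1 μW2 Ct W1t W2t s c := by
    intro s c
    have hmeas : Measurable (fun p : Euc d × ℝ =>
        (p.2 - limG σ μc μW1 μW2 Ct W1t W2t s p.1) *
        σ (limZ σ μW1 μW2 W1t W2t s c p.1)) := by
      refine (measurable_snd.sub ((LLD.mG σ μc μW1 μW2 Ct W1t W2t hσc hm1 hm2 hm3
        s).comp measurable_fst)).mul (hσc.measurable.comp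
        ((LLD.mZ σ μW1 μW2 W1t W2t hσc hm2 hm3 s).comp
          (measurable_const.prodMk measurable_fst)))
    rw [hπ, integral_map hφm hmeas.aestronglyMeasurable]
    simp only [limR1]
    rw [hresX]
  have convW1 : ∀ (s : ℝ) (w : Euc d),
      (∫ p, ((p.2 - limG σ μc μW1 μW2 Ct W1t W2t s p.1) *
        limV σ μc μW1 μW2 Ct W1t W2t s w p.1 *
        deriv σ (⟪W1t s w, p.1⟫)) • p.1 ∂π) =
      limR2 σ f πX SX μc μW1 μW2 Ct W1t W2t s w := by
    intro s w
    have hmeas : Measurable (fun p : Euc d × ℝ =>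
        ((p.2 - limG σ μc μW1 μW2 Ct W1t W2t s p.1) *
          limV σ μc μW1 μW2 Ct W1t W2t s w p.1 *
          deriv σ (⟪W1t s w, p.1⟫)) • p.1) := by
      refine Measurable.fun_smul ?_ measurable_fst
      refine ((measurable_snd.sub ((LLD.mG σ μc μW1 μW2 Ct W1t W2t hσc hm1 hm2 hm3
        s).comp measurable_fst)).mul
        ((LLD.mV σ μc μW1 μW2 Ct W1t W2t hσc hm1 hm2 hm3 hσ'm s).comp
          (measurable_const.prodMk measurable_fst))).mul
        (hσ'm.comp (measurable_const.inner measurable_fst))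
    rw [hπ, integral_map hφm hmeas.aestronglyMeasurable]
    simp only [limR2]
    rw [hresX]
  have convW2 : ∀ (s c : ℝ) (w : Euc d),
      (∫ p, (p.2 - limG σ μc μW1 μW2 Ct W1t W2t s p.1) * Ct s c *
        deriv σ (limZ σ μW1 μW2 W1t W2t s c p.1) * σ (⟪W1t s w, p.1⟫) ∂π) =
      limR3 σ f πX SX μc μW1 μW2 Ct W1t W2t s c w := by
    intro s c w
    have hmeas : Measurable (fun p : Euc d × ℝ =>
        (p.2 - limG σ μc μW1 μW2 Ct W1t W2t s p.1) * Ct s c *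
        deriv σ (limZ σ μW1 μW2 W1t W2t s c p.1) * σ (⟪W1t s w, p.1⟫)) := by
      refine (((measurable_snd.sub ((LLD.mG σ μc μW1 μW2 Ct W1t W2t hσc hm1 hm2 hm3
        s).comp measurable_fst)).mul measurable_const).mul
        (hσ'm.comp ((LLD.mZ σ μW1 μW2 W1t W2t hσc hm2 hm3 s).comp
          (measurable_const.prodMk measurable_fst)))).mul
        (hσc.measurable.comp (measurable_const.inner measurable_fst))
    rw [hπ, integral_map hφm hmeas.aestronglyMeasurable]
    simp only [limR3]
    rw [hresX]
  have H : LLD.Hyp σ f πX μc μW1 μW2 SX SC SW1 SW2 Ct W1t W2t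
      (max M₀ 0) (max B₀ 0) (max Mf₀ 0) (max K₀ 0) :=
    { pX := hπX, pc := hμc, pw1 := hμW1, pw2 := hμW2
      hσ := hσ
      hB := fun z => ⟨((hB₀ z).1).trans (le_max_left _ _),
        ((hB₀ z).2.1).trans (le_max_left _ _)⟩
      hfm := hf
      hMf := fun x hx => (hMf₀ x hx).trans (le_max_left _ _)
      hKx := fun x hx => (hK₀ x hx).trans (le_max_left _ _)
      hM := fun t ht => ⟨fun c hc => ((hM₀ t ht).1 c hc).trans (le_max_left _ _),
        fun w hw => ((hM₀ t ht).2.1 w hw).trans (le_max_left _ _),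
        fun c hc w hw u hu => ((hM₀ t ht).2.2 c hc w hw u hu).trans (le_max_left _ _)⟩
      h0B := le_max_right _ _
      h0M := le_max_right _ _
      h0Mf := le_max_right _ _
      h0Kx := le_max_right _ _
      hXs := hπXs, hcs := hμcs, hw1s := hμW1s, hw2s := hμW2s
      hSXm := hSX.isClosed.measurableSet
      hSCm := hSC.isClosed.measurableSet
      hSW1m := hSW1.isClosed.measurableSet
      hSW2m := hSW2.isClosed.measurableSet
      hCcont := hc1, hW1cont := hc2, hW2cont := hc3
      hCm := hm1, hW1m := hm2, hW2m := hm3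
      heqC := by
        intro t ht c hc
        rw [he1 t ht c hc]
        congr 1
        exact integral_congr_ae (Filter.Eventually.of_forall fun s => convC s c)
      heqW1 := by
        intro t ht w hw
        rw [he2 t ht w hw]
        congr 1
        exact integral_congr_ae (Filter.Eventually.of_forall fun s => convW1 s w)
      heqW2 := by
        intro t ht c hc w hw u hu
        rw [he3 t ht c hc w hw u hu]
        congr 1
        exact integral_congr_ae (Filter.Eventually.of_forall fun s => convW2 s c w) }
  obtain ⟨hd, hmono⟩ := LLD.mainHyp H
  refine ⟨fun t ht => ⟨hd t ht, ?_⟩, hmono⟩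
  exact neg_nonpos.mpr (LLD.Phi0 H t)
end
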